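/- arXiv:1110.0926 — 10 statements merged into one kernel-verified Lean document; each statement's English description precedes it below -/
import Mathlib

section
/- Let A_{n+1} be the simple (n+1)-dimensional n-ary Filippov algebra with standard basis e_1,...,e_{n+1}. Let f_0 be the linear map whose matrix in this basis is A = (a_{ij}) with all diagonal entries a_{ii} = 0, and let f be the linear map with matrix B = -A^T. Then (f_0, f, ..., f) is an (n+1)-ary derivation of A_{n+1}. -/
open Matrix

section CrossAux

variable {k : Type*} [Field k] {n : ℕ}

/-- The "cross product" alternating map on `n` vectors in `k^{n+1}`. -/
noncomputable def crossAlt (k : Type*) [Field k] (n : ℕ) :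
    (Fin (n+1) → k) [⋀^Fin n]→ₗ[k] (Fin (n+1) → k) :=
  AlternatingMap.pi fun p => ((-1 : k) ^ (n + (p : ℕ))) •
    (Matrix.detRowAlternating.compLinearMap (LinearMap.funLeft k k p.succAbove))

lemma crossAlt_apply (x : Fin n → (Fin (n+1) → k)) (p : Fin (n+1)) :
    crossAlt k n x p
      = (-1 : k) ^ (n + (p : ℕ)) * Matrix.det (Matrix.of fun i i' => x i (p.succAbove i')) := by
  simp [crossAlt, Matrix.detRowAlternating, AlternatingMap.compLinearMap, LinearMap.funLeft]
  rfl

lemma crossAlt_basis (i : Fin (n+1)) :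
    crossAlt k n (fun j => Pi.single (i.succAbove j) (1 : k))
      = ((-1 : k) ^ (n + (i : ℕ))) • (Pi.single i (1 : k) : Fin (n+1) → k) := by
  funext p
  rw [crossAlt_apply]
  rcases eq_or_ne p i with rfl | hpi
  · have : (Matrix.of fun j i' => (Pi.single (p.succAbove j) (1:k) : Fin (n+1) → k) (p.succAbove i'))
        = (1 : Matrix (Fin n) (Fin n) k) := by
      ext j i'
      rcases eq_or_ne j i' with rfl | h
      · simp
      · simp [Matrix.one_apply, h, Pi.single_apply,
          (Fin.succAbove_right_injective (p := p)).ne h,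
          (Fin.succAbove_right_injective (p := p)).ne h.symm, h.symm]
    rw [this, Matrix.det_one]
    simp
  · obtain ⟨z, hz⟩ := Fin.exists_succAbove_eq (Ne.symm hpi)
    rw [Matrix.det_eq_zero_of_column_eq_zero z (fun j => ?_)]
    · simp [Pi.single_apply, hpi]
    · show (Pi.single (i.succAbove j) (1:k) : Fin (n+1) → k) (p.succAbove z) = 0
      rw [hz, Pi.single_apply, if_neg (fun h => Fin.succAbove_ne i j h.symm)]

lemma eq_crossAlt
    (m : MultilinearMap k (fun _ : Fin n => (Fin (n + 1) → k)) (Fin (n + 1) → k))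
    (halt : ∀ (x : Fin n → (Fin (n + 1) → k)) (p q : Fin n), p ≠ q → x p = x q → m x = 0)
    (hbasis : ∀ i : Fin (n + 1),
      m (fun j => Pi.single (i.succAbove j) (1 : k)) =
        ((-1 : k) ^ (n + (i : ℕ))) • (Pi.single i (1 : k) : Fin (n + 1) → k)) :
    ∀ x, m x = crossAlt k n x := by
  let mAlt : (Fin (n+1) → k) [⋀^Fin n]→ₗ[k] (Fin (n+1) → k) :=
    { toMultilinearMap := m
      map_eq_zero_of_eq' := fun v i j hv hij => halt v i j hij hv }
  suffices h : mAlt = crossAlt k n by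
    intro x; rw [show m x = mAlt x from rfl, h]
  refine Module.Basis.ext_alternating (Pi.basisFun k (Fin (n+1))) (fun v hv => ?_)
  have hns : ¬ Function.Surjective v := by
    intro hs
    have := Fintype.card_le_of_surjective v hs
    simp at this
  rw [Function.Surjective] at hns
  push_neg at hns
  obtain ⟨i₀, hi₀⟩ := hns
  choose u hu using fun j => Fin.exists_succAbove_eq (hi₀ j)
  have huinj : Function.Injective u := fun a b h => hv (by rw [← hu a, ← hu b, h])
  let σ : Equiv.Perm (Fin n) := Equiv.ofBijective u (Finite.injective_iff_bijective.mp huinj)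
  have h1 : (fun j => Pi.basisFun k (Fin (n+1)) (v j))
      = (fun j => (Pi.single (i₀.succAbove j) (1:k) : Fin (n+1) → k)) ∘ σ := by
    funext j
    have : v j = i₀.succAbove (σ j) := (hu j).symm
    simp [this, σ, Equiv.ofBijective]
  rw [show (fun j => Pi.basisFun k (Fin (n+1)) (v j)) = _ from h1]
  rw [AlternatingMap.map_perm, AlternatingMap.map_perm]
  have h2 : mAlt (fun j => (Pi.single (i₀.succAbove j) (1:k) : Fin (n+1) → k))
      = crossAlt k n (fun j => (Pi.single (i₀.succAbove j) (1:k) : Fin (n+1) → k)) := by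
    show m _ = _
    rw [hbasis i₀, crossAlt_basis i₀]
  rw [h2]

lemma pairing (y : Fin (n+1) → k) (x : Fin n → (Fin (n+1) → k)) :
    ∑ j, y j * crossAlt k n x j
      = (-1:k)^n * Matrix.det (Matrix.of (Fin.cons y x : Fin (n+1) → Fin (n+1) → k)) := by
  rw [Matrix.det_succ_row_zero, Finset.mul_sum]
  refine Finset.sum_congr rfl fun j _ => ?_
  rw [crossAlt_apply]
  have hsub : (Matrix.of (Fin.cons y x : Fin (n+1) → Fin (n+1) → k)).submatrix Fin.succ j.succAbove
       = Matrix.of fun i i' => x i (j.succAbove i') := by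
    ext i i'
    simp [Matrix.submatrix_apply]
  rw [hsub]
  have h0 : (Matrix.of (Fin.cons y x : Fin (n+1) → Fin (n+1) → k)) 0 j = y j := rfl
  rw [h0, pow_add]
  ring

lemma sum_det_updateRow (B N : Matrix (Fin (n+1)) (Fin (n+1)) k) (hB : Matrix.trace B = 0) :
    ∑ r, Matrix.det (N.updateRow r (B.mulVec (N r))) = 0 := by
  have h1 : ∀ (r : Fin (n+1)) (b : Fin (n+1) → k),
      Matrix.det (N.updateRow r b) = ((Nᵀ.adjugate).mulVec b) r := by
    intro r b
    rw [← Matrix.cramer_transpose_apply, Matrix.cramer_eq_adjugate_mulVec]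
  have h2 : ∑ r, Matrix.det (N.updateRow r (B.mulVec (N r)))
      = Matrix.trace (Nᵀ.adjugate * B * Nᵀ) := by
    rw [Matrix.trace]
    refine Finset.sum_congr rfl fun r _ => ?_
    rw [h1, Matrix.mulVec_mulVec]
    simp [Matrix.mulVec, Matrix.diag, Matrix.mul_apply, dotProduct, Matrix.transpose_apply]
  rw [h2, Matrix.trace_mul_cycle, Matrix.mul_adjugate,
    Matrix.smul_mul, Matrix.one_mul, Matrix.trace_smul, hB, smul_zero]

end CrossAux

/-- In the simple `(n+1)`-dimensional `n`-ary Filippov algebra `A_{n+1}`, if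
`f₀` has matrix `A` (in the standard basis) with zero diagonal and `f` has matrix `-Aᵀ`,
then `(f₀, f, …, f)` is an `(n+1)`-ary derivation. -/
theorem Anp1_matrix_derivation
    {k : Type*} [Field k] [CharZero k] {n : ℕ} (hn : 2 ≤ n)
    (m : MultilinearMap k (fun _ : Fin n => (Fin (n + 1) → k)) (Fin (n + 1) → k))
    (halt : ∀ (x : Fin n → (Fin (n + 1) → k)) (p q : Fin n), p ≠ q → x p = x q → m x = 0)
    (hbasis : ∀ i : Fin (n + 1),
      m (fun j => Pi.single (i.succAbove j) (1 : k)) =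
        ((-1 : k) ^ (n + (i : ℕ))) • (Pi.single i (1 : k) : Fin (n + 1) → k))
    (A : Matrix (Fin (n + 1)) (Fin (n + 1)) k) (hdiag : ∀ i, A i i = 0) :
    ∀ x : Fin n → (Fin (n + 1) → k),
      A.mulVecLin (m x) = ∑ i, m (Function.update x i ((-Aᵀ).mulVecLin (x i))) := by
  intro x
  have hm := eq_crossAlt m halt hbasis
  set B : Matrix (Fin (n+1)) (Fin (n+1)) k := -Aᵀ with hBdef
  have htr : Matrix.trace B = 0 := by
    simp [hBdef, Matrix.trace, Matrix.diag, hdiag]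
  have hcomp : ∀ (z : Fin n → (Fin (n+1) → k)) (q : Fin (n+1)),
      crossAlt k n z q
        = (-1:k)^n * Matrix.det (Matrix.of
            (Fin.cons (Pi.single q 1) z : Fin (n+1) → Fin (n+1) → k)) := by
    intro z q
    rw [← pairing (Pi.single q (1:k)) z, Finset.sum_eq_single q]
    · simp
    · intro b _ hb
      simp [Pi.single_apply, hb.symm]
    · simp
  funext p
  set N : Matrix (Fin (n+1)) (Fin (n+1)) k :=
    Matrix.of (Fin.cons (Pi.single p 1) x : Fin (n+1) → Fin (n+1) → k) with hNdef
  -- left-hand side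
  have hN0 : N 0 = Pi.single p 1 := rfl
  have hy0 : (fun r => A p r) = -(B.mulVec (N 0)) := by
    funext r
    simp [hN0, hBdef, Matrix.mulVec_single]
  have hLHS : (A.mulVecLin (m x)) p
      = (-1:k)^n * Matrix.det (N.updateRow 0 (-(B.mulVec (N 0)))) := by
    rw [hm x, Matrix.mulVecLin_apply]
    have : (A.mulVec (crossAlt k n x)) p = ∑ r, A p r * crossAlt k n x r := by
      simp [Matrix.mulVec, dotProduct]
    rw [this]
    have hrow : (Matrix.of (Fin.cons (fun r => A p r) x : Fin (n+1) → Fin (n+1) → k))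
        = N.updateRow 0 (-(B.mulVec (N 0))) := by
      ext r c
      refine Fin.cases ?_ (fun j => ?_) r
      · rw [← hy0]
        simp [Matrix.updateRow_apply]
      · simp [Matrix.updateRow_apply, Fin.succ_ne_zero, hNdef]
    rw [pairing (fun r => A p r) x, hrow]
  -- right-hand side rows
  have hrows : ∀ i : Fin n,
      (Matrix.of (Fin.cons (Pi.single p 1)
          (Function.update x i (B.mulVec (x i))) : Fin (n+1) → Fin (n+1) → k))
        = N.updateRow i.succ (B.mulVec (N i.succ)) := by
    intro i
    have hNsucc : N i.succ = x i := rfl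
    ext r c
    refine Fin.cases ?_ (fun j => ?_) r
    · simp [Matrix.updateRow_apply, (Fin.succ_ne_zero i).symm, hNdef]
    · rcases eq_or_ne j i with rfl | hji
      · simp [Matrix.updateRow_apply, hNsucc]
      · have hsne : j.succ ≠ i.succ := fun h => hji (Fin.succ_injective _ h)
        simp [Matrix.updateRow_apply, Function.update_of_ne hji, Function.update_of_ne hsne,
          hsne, hNdef]
  have hRHS : (∑ i : Fin n, m (Function.update x i (B.mulVecLin (x i)))) p
      = (-1:k)^n * ∑ i : Fin n, Matrix.det (N.updateRow (Fin.succ i) (B.mulVec (N (Fin.succ i)))) := by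
    rw [Finset.sum_apply, Finset.mul_sum]
    refine Finset.sum_congr rfl fun i _ => ?_
    rw [hm, hcomp]
    have hupd : Function.update x i (B.mulVecLin (x i)) = Function.update x i (B.mulVec (x i)) := by
      rw [Matrix.mulVecLin_apply]
    rw [hupd, hrows i]
  -- the trace identity
  have hsum := sum_det_updateRow B N htr
  rw [Fin.sum_univ_succ] at hsum
  have hneg : Matrix.det (N.updateRow 0 (-(B.mulVec (N 0))))
      = - Matrix.det (N.updateRow 0 (B.mulVec (N 0))) := by
    rw [show -(B.mulVec (N 0)) = (-1 : k) • (B.mulVec (N 0)) by simp,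
      Matrix.det_updateRow_smul]
    ring
  rw [hLHS, hRHS, hneg]
  have : ∑ i : Fin n, Matrix.det (N.updateRow i.succ (B.mulVec (N i.succ)))
      = - Matrix.det (N.updateRow 0 (B.mulVec (N 0))) := eq_neg_of_add_eq_zero_right hsum
  rw [this]
end

section
/- Let (f_0, f_1, ..., f_n) be an (n+1)-ary derivation of the simple n-ary Filippov algebra A_{n+1}. Then for all indices k, m ∈ {1,...,n} and all basis indices i ≠ j, the coefficient of e_j in (f_k - f_m)(e_i) is zero; i.e., the off-diagonal matrix entries of all the maps f_1, ..., f_n coincide. -/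
/-- For an `(n+1)`-ary derivation `(f₀, f₁, …, fₙ)` of `A_{n+1}`, the
off-diagonal matrix entries of all the maps `f₁, …, fₙ` coincide: for all `p, q` and all
basis indices `i ≠ j`, the coefficient of `eⱼ` in `(f_p - f_q)(eᵢ)` vanishes. -/
theorem Anp1_offdiagonal_entries_coincide
    {k : Type*} [Field k] [CharZero k] {n : ℕ} (hn : 2 ≤ n)
    (m : MultilinearMap k (fun _ : Fin n => (Fin (n + 1) → k)) (Fin (n + 1) → k))
    (halt : ∀ (x : Fin n → (Fin (n + 1) → k)) (p q : Fin n), p ≠ q → x p = x q → m x = 0)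
    (hbasis : ∀ i : Fin (n + 1),
      m (fun j => Pi.single (i.succAbove j) (1 : k)) =
        ((-1 : k) ^ (n + (i : ℕ))) • (Pi.single i (1 : k) : Fin (n + 1) → k))
    (f0 : (Fin (n + 1) → k) →ₗ[k] (Fin (n + 1) → k))
    (f : Fin n → ((Fin (n + 1) → k) →ₗ[k] (Fin (n + 1) → k)))
    (hder : ∀ x : Fin n → (Fin (n + 1) → k),
      f0 (m x) = ∑ i, m (Function.update x i (f i (x i)))) :
    ∀ (p q : Fin n) (i j : Fin (n + 1)), i ≠ j →
      (f p (Pi.single i (1 : k)) - f q (Pi.single i (1 : k))) j = 0 := by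
  classical
  intro p q i j hij
  rcases eq_or_ne p q with rfl | hpq
  · simp
  -- `m` as an alternating map
  let M : AlternatingMap k (Fin (n + 1) → k) (Fin (n + 1) → k) (Fin n) :=
    { m with map_eq_zero_of_eq' := fun v a b h hab => halt v a b hab h }
  have hM : ∀ v, m v = M v := fun _ => rfl
  -- Key lemma: on an injective tuple of basis vectors avoiding index t, m is a
  -- nonzero multiple of e_t.
  have keyL : ∀ (v : Fin n → Fin (n + 1)) (t : Fin (n + 1)), Function.Injective v →
      (∀ r, v r ≠ t) →
      ∃ c : k, c ≠ 0 ∧ m (fun r => Pi.single (v r) (1 : k)) = c • (Pi.single t 1 : Fin (n + 1) → k) := by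
    intro v t hv hvt
    choose τ hτ using fun r => Fin.exists_succAbove_eq (hvt r)
    have hτinj : Function.Injective τ := fun a b hab => hv (by rw [← hτ a, ← hτ b, hab])
    have hτbij : Function.Bijective τ := Finite.injective_iff_bijective.mp hτinj
    let σ : Equiv.Perm (Fin n) := Equiv.ofBijective τ hτbij
    have hcomp : (fun r => Pi.single (v r) (1 : k)) =
        (fun r => Pi.single (t.succAbove r) (1 : k)) ∘ σ := by
      funext r
      simp only [Function.comp_apply]
      rw [show σ r = τ r from rfl, hτ r]
    refine ⟨((Equiv.Perm.sign σ : ℤ) : k) * (-1) ^ (n + (t : ℕ)), ?_, ?_⟩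
    · refine mul_ne_zero ?_ (pow_ne_zero _ (neg_ne_zero.mpr one_ne_zero))
      rcases Int.units_eq_one_or (Equiv.Perm.sign σ) with h | h <;> rw [h] <;> norm_num
    · have hperm := M.map_perm (fun r => Pi.single (t.succAbove r) (1 : k)) σ
      rw [hM, hcomp, hperm, ← hM, hbasis t, Units.smul_def, ← Int.cast_smul_eq_zsmul k,
        smul_smul]
  -- the tuple x : all basis vectors except e_j, with e_i in slot p
  obtain ⟨i₀, hi₀⟩ := Fin.exists_succAbove_eq hij
  set u : Fin n → Fin (n + 1) := fun r => j.succAbove (Equiv.swap p i₀ r) with hu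
  have hu_inj : Function.Injective u :=
    Fin.succAbove_right_injective.comp (Equiv.swap p i₀).injective
  have hup : u p = i := by
    simp only [hu, Equiv.swap_apply_left]; exact hi₀
  have huj : ∀ r, u r ≠ j := fun r => Fin.succAbove_ne j _
  have hu_surj : ∀ s : Fin (n + 1), s ≠ j → ∃ r, u r = s := by
    intro s hs
    obtain ⟨z, hz⟩ := Fin.exists_succAbove_eq hs
    exact ⟨Equiv.swap p i₀ z, by simp only [hu, Equiv.swap_apply_self, hz]⟩
  set x : Fin n → Fin (n + 1) → k := fun r => Pi.single (u r) 1 with hx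
  -- derive the swap identity
  have e1 : ∀ (r : Fin n) (w : Fin (n + 1) → k),
      Function.update (x ∘ Equiv.swap p q) r w
        = (Function.update x (Equiv.swap p q r) w) ∘ Equiv.swap p q := by
    intro r w
    funext s
    rcases eq_or_ne s r with rfl | hs
    · simp
    · simp [Function.update_apply, hs, (Equiv.swap p q).injective.ne hs]
  have h1 := hder x
  have h2 := hder (x ∘ Equiv.swap p q)
  have h2' : f0 (m x) = ∑ r, m (Function.update x r (f (Equiv.swap p q r) (x r))) := by
    have hswapx : m (x ∘ Equiv.swap p q) = -m x := by rw [hM, hM]; exact M.map_swap x hpq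
    rw [hswapx, map_neg] at h2
    have hterm : ∀ r, m (Function.update (x ∘ Equiv.swap p q) r
          (f r ((x ∘ Equiv.swap p q) r)))
        = -m (Function.update x (Equiv.swap p q r) (f r (x (Equiv.swap p q r)))) := by
      intro r
      rw [show (x ∘ Equiv.swap p q) r = x (Equiv.swap p q r) from rfl, e1, hM, hM]
      exact M.map_swap _ hpq
    simp only [hterm] at h2
    rw [Finset.sum_neg_distrib] at h2
    have h2'' := neg_injective h2
    rw [h2'']
    calc ∑ r, m (Function.update x (Equiv.swap p q r) (f r (x (Equiv.swap p q r))))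
        = ∑ r, (fun r' => m (Function.update x r' (f (Equiv.swap p q r') (x r'))))
            (Equiv.swap p q r) := by
          refine Finset.sum_congr rfl fun r _ => ?_
          simp only [Equiv.swap_apply_self]
      _ = ∑ r, m (Function.update x r (f (Equiv.swap p q r) (x r))) :=
          Equiv.sum_comp (Equiv.swap p q)
            (fun r' => m (Function.update x r' (f (Equiv.swap p q r') (x r'))))
  have h3 : ∑ r, (m (Function.update x r (f (Equiv.swap p q r) (x r)))
      - m (Function.update x r (f r (x r)))) = 0 := by
    rw [Finset.sum_sub_distrib, ← h1, ← h2', sub_self]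
  have h5 : ∑ r ∈ ({p, q} : Finset (Fin n)),
      (m (Function.update x r (f (Equiv.swap p q r) (x r)))
        - m (Function.update x r (f r (x r))))
      = ∑ r, (m (Function.update x r (f (Equiv.swap p q r) (x r)))
        - m (Function.update x r (f r (x r)))) := by
    refine Finset.sum_subset (Finset.subset_univ _) ?_
    intro r _ hr
    simp only [Finset.mem_insert, Finset.mem_singleton, not_or] at hr
    rw [Equiv.swap_apply_of_ne_of_ne hr.1 hr.2, sub_self]
  rw [h3, Finset.sum_pair hpq, Equiv.swap_apply_left, Equiv.swap_apply_right] at h5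
  have key : m (Function.update x p (f p (x p) - f q (x p)))
      = m (Function.update x q (f p (x q) - f q (x q))) := by
    rw [MultilinearMap.map_update_sub, MultilinearMap.map_update_sub]
    linear_combination -h5
  -- expansion of an updated slot along the basis
  have expand : ∀ (a : Fin n) (w : Fin (n + 1) → k),
      m (Function.update x a w) = ∑ s, w s • m (Function.update x a (Pi.single s 1)) := by
    intro a w
    have hw : w = ∑ s, w s • (Pi.single s 1 : Fin (n + 1) → k) := by
      ext t
      simp [Finset.sum_apply, Pi.single_apply]
    calc m (Function.update x a w) = m.toLinearMap x a w := rfl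
      _ = m.toLinearMap x a (∑ s, w s • (Pi.single s 1 : Fin (n + 1) → k)) := by rw [← hw]
      _ = ∑ s, w s • m.toLinearMap x a (Pi.single s 1) := by
          rw [map_sum]; simp only [map_smul]
      _ = ∑ s, w s • m (Function.update x a (Pi.single s 1)) := rfl
  -- vanishing of most coefficients
  have coeff0 : ∀ (a : Fin n) (s : Fin (n + 1)), s ≠ j → s ≠ u a →
      m (Function.update x a (Pi.single s 1)) = 0 := by
    intro a s hsj hsa
    obtain ⟨r, hr⟩ := hu_surj s hsj
    have hra : r ≠ a := fun h => hsa (by rw [← hr, h])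
    refine halt _ r a hra ?_
    rw [Function.update_of_ne hra, Function.update_self]
    simp only [hx, hr]
  have coeffx : m x i = 0 := by
    obtain ⟨c, _, hcx⟩ := keyL u j hu_inj huj
    rw [hx, hcx, Pi.smul_apply, Pi.single_eq_of_ne hij, smul_zero]
  have hupdate_inj : ∀ a : Fin n, Function.Injective (Function.update u a j) := by
    intro a r s hrs
    by_cases hr : r = a
    · by_cases hs : s = a
      · rw [hr, hs]
      · subst hr
        rw [Function.update_self, Function.update_of_ne hs] at hrs
        exact absurd hrs.symm (huj s)
    · by_cases hs : s = a
      · subst hs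
        rw [Function.update_of_ne hr, Function.update_self] at hrs
        exact absurd hrs (huj r)
      · rw [Function.update_of_ne hr, Function.update_of_ne hs] at hrs
        exact hu_inj hrs
  have hupdate_avoid : ∀ a : Fin n, ∀ r, Function.update u a j r ≠ u a := by
    intro a r
    by_cases hr : r = a
    · subst hr
      rw [Function.update_self]
      exact fun h => (huj r) h.symm
    · rw [Function.update_of_ne hr]
      exact fun h => hr (hu_inj h)
  have hxupdate : ∀ a : Fin n,
      (fun r => Pi.single (Function.update u a j r) (1 : k))
        = Function.update x a (Pi.single j 1) := by
    intro a
    funext r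
    by_cases hr : r = a
    · subst hr
      rw [Function.update_self, Function.update_self]
    · rw [Function.update_of_ne hr, Function.update_of_ne hr]
  have coeffj : ∀ a : Fin n, ∃ c : k, c ≠ 0 ∧
      m (Function.update x a (Pi.single j 1)) = c • (Pi.single (u a) 1 : Fin (n + 1) → k) := by
    intro a
    obtain ⟨c, hc, hcx⟩ := keyL (Function.update u a j) (u a) (hupdate_inj a) (hupdate_avoid a)
    exact ⟨c, hc, by rw [← hxupdate a]; exact hcx⟩
  -- evaluate `key` at coordinate i
  obtain ⟨cL, hcL, hLp⟩ := coeffj p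
  rw [hup] at hLp
  have hLHS : m (Function.update x p (f p (x p) - f q (x p))) i
      = (f p (x p) - f q (x p)) j * cL := by
    rw [expand p, Finset.sum_apply]
    rw [Finset.sum_eq_single j]
    · rw [Pi.smul_apply, hLp, Pi.smul_apply, Pi.single_eq_same, smul_eq_mul, smul_eq_mul,
        mul_one]
    · intro s _ hs
      rcases eq_or_ne s (u p) with rfl | hsu
      · have hxp : Pi.single (u p) (1 : k) = x p := by simp only [hx]
        rw [Pi.smul_apply, hxp, Function.update_eq_self, coeffx, smul_zero]
      · rw [Pi.smul_apply, coeff0 p s hs hsu, Pi.zero_apply, smul_zero]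
    · intro h
      exact absurd (Finset.mem_univ j) h
  have huqi : u q ≠ i := by
    rw [← hup]
    exact fun h => hpq (hu_inj h).symm
  have hRHS : m (Function.update x q (f p (x q) - f q (x q))) i = 0 := by
    rw [expand q, Finset.sum_apply]
    refine Finset.sum_eq_zero ?_
    intro s _
    rw [Pi.smul_apply]
    rcases eq_or_ne s j with rfl | hsj
    · obtain ⟨c, _, hcq⟩ := coeffj q
      rw [hcq, Pi.smul_apply, Pi.single_eq_of_ne (fun h => huqi h.symm), smul_zero, smul_zero]
    · rcases eq_or_ne s (u q) with rfl | hsu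
      · have hxq : Pi.single (u q) (1 : k) = x q := by simp only [hx]
        rw [hxq, Function.update_eq_self, coeffx, smul_zero]
      · rw [coeff0 q s hsj hsu, Pi.zero_apply, smul_zero]
  have final : (f p (x p) - f q (x p)) j = 0 := by
    have hk := congrFun key i
    rw [hLHS, hRHS] at hk
    exact (mul_eq_zero.mp hk).resolve_right hcL
  have hxp : x p = Pi.single i 1 := by simp only [hx]; rw [hup]
  rw [hxp] at final
  exact final
end

section
/- Every (n+1)-ary derivation (f_0, f_1, ..., f_n) of the simple n-ary Filippov algebra A_{n+1} decomposes as (f_0,...,f_n) = (g_0, g, ..., g) + (f_0^*, f_1^*, ..., f_n^*), where each f_j^* is diagonal in the standard basis (f_j^*(e_i) is a scalar multiple of e_i for all i), and g_0, g have zero diagonal entries in the standard basis, with (g_0, g, ..., g) itself an (n+1)-ary derivation satisfying [g]= -[g_0]^T. -/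
open Equiv Equiv.Perm

section
variable {k : Type*} [Field k] {n : ℕ}

theorem lemD
    (m : MultilinearMap k (fun _ : Fin n => (Fin (n + 1) → k)) (Fin (n + 1) → k))
    (halt : ∀ (x : Fin n → (Fin (n + 1) → k)) (p q : Fin n), p ≠ q → x p = x q → m x = 0)
    (hbasis : ∀ i : Fin (n + 1),
      m (fun j => Pi.single (i.succAbove j) (1 : k)) =
        ((-1 : k) ^ (n + (i : ℕ))) • (Pi.single i (1 : k) : Fin (n + 1) → k))
    (ρ : Equiv.Perm (Fin (n + 1))) :
    m (fun q => Pi.single (ρ q.succ) (1 : k)) =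
      (((Perm.sign ρ : ℤ) : k) * (-1 : k) ^ n) • (Pi.single (ρ 0) (1 : k) : Fin (n + 1) → k) := by
  set t : Fin (n + 1) := ρ 0 with ht
  set δ : Equiv.Perm (Fin (n + 1)) := t.cycleRange * ρ with hδ
  have hδ0 : δ 0 = 0 := by
    simp [hδ, Perm.mul_apply, ← ht, Fin.cycleRange_self]
  rcases hpair : Equiv.Perm.decomposeFin δ with ⟨p₀, σ⟩
  have hδeq : δ = Equiv.Perm.decomposeFin.symm (p₀, σ) := by
    rw [← hpair, Equiv.symm_apply_apply]
  have hp₀ : p₀ = 0 := by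
    rw [← hδ0, hδeq, Equiv.Perm.decomposeFin_symm_apply_zero]
  subst hp₀
  have hρsucc : ∀ q : Fin n, ρ q.succ = t.succAbove (σ q) := by
    intro q
    have h3 : δ q.succ = (σ q).succ := by
      rw [hδeq, Equiv.Perm.decomposeFin_symm_apply_succ, Equiv.swap_self]
      rfl
    have h4 : ρ q.succ = t.cycleRange.symm (δ q.succ) := by
      rw [hδ]; simp [Perm.mul_apply]
    rw [h4, h3, Fin.cycleRange_symm_succ]
  have hsignδ : Perm.sign δ = Perm.sign σ := by
    rw [hδeq, Equiv.Perm.decomposeFin.symm_sign]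
    simp
  have hsignσ : (Perm.sign σ : ℤˣ) = (-1) ^ (t : ℕ) * Perm.sign ρ := by
    rw [← hsignδ, hδ, Equiv.Perm.sign_mul, Fin.sign_cycleRange]
  have A : AlternatingMap k (Fin (n + 1) → k) (Fin (n + 1) → k) (Fin n) :=
    ⟨m, fun v i j hv hij => halt v i j hij hv⟩
  have hmA : m (fun q => Pi.single (ρ q.succ) (1 : k)) =
      Perm.sign σ • m (fun j => Pi.single (t.succAbove j) (1 : k)) := by
    have heq : (fun q => (Pi.single (ρ q.succ) (1 : k) : Fin (n+1) → k)) =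
        (fun j => (Pi.single (t.succAbove j) (1 : k) : Fin (n+1) → k)) ∘ σ := by
      funext q
      simp [Function.comp, hρsucc q]
    rw [heq]
    exact (⟨m, fun v i j hv hij => halt v i j hij hv⟩ :
      AlternatingMap k (Fin (n + 1) → k) (Fin (n + 1) → k) (Fin n)).map_perm _ σ
  rw [hmA, hbasis t]
  rw [hsignσ, Units.smul_def, ← Int.cast_smul_eq_zsmul k, smul_smul]
  congr 1
  push_cast
  have h2 : (-1:k)^(t:ℕ) * (-1:k)^(t:ℕ) = 1 := by
    rw [← pow_add, ← two_mul, pow_mul]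
    norm_num
  rw [pow_add]
  calc (-1:k)^(t:ℕ) * ((Perm.sign ρ : ℤ):k) * ((-1:k)^n * (-1:k)^(t:ℕ))
      = ((Perm.sign ρ : ℤ):k) * (-1:k)^n * ((-1:k)^(t:ℕ) * (-1:k)^(t:ℕ)) := by ring
    _ = ((Perm.sign ρ : ℤ):k) * (-1:k)^n := by rw [h2, mul_one]

theorem lemE
    (m : MultilinearMap k (fun _ : Fin n => (Fin (n + 1) → k)) (Fin (n + 1) → k))
    (halt : ∀ (x : Fin n → (Fin (n + 1) → k)) (p q : Fin n), p ≠ q → x p = x q → m x = 0)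
    (hbasis : ∀ i : Fin (n + 1),
      m (fun j => Pi.single (i.succAbove j) (1 : k)) =
        ((-1 : k) ^ (n + (i : ℕ))) • (Pi.single i (1 : k) : Fin (n + 1) → k))
    (lemD : ∀ ρ : Equiv.Perm (Fin (n + 1)),
      m (fun q => Pi.single (ρ q.succ) (1 : k)) =
        (((Perm.sign ρ : ℤ) : k) * (-1 : k) ^ n) • (Pi.single (ρ 0) (1 : k) : Fin (n + 1) → k))
    (f0 : (Fin (n + 1) → k) →ₗ[k] (Fin (n + 1) → k))
    (f : Fin n → ((Fin (n + 1) → k) →ₗ[k] (Fin (n + 1) → k)))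
    (hder : ∀ x : Fin n → (Fin (n + 1) → k),
      f0 (m x) = ∑ i, m (Function.update x i (f i (x i))))
    (ρ : Equiv.Perm (Fin (n + 1))) :
    f0 (Pi.single (ρ 0) (1 : k)) =
      ∑ p : Fin n,
        ((f p (Pi.single (ρ p.succ) (1 : k)) (ρ p.succ)) • (Pi.single (ρ 0) (1 : k) : Fin (n+1) → k)
          - (f p (Pi.single (ρ p.succ) (1 : k)) (ρ 0)) • (Pi.single (ρ p.succ) (1 : k) : Fin (n+1) → k)) := by
  classical
  set B : Fin (n+1) → (Fin (n+1) → k) := fun i => Pi.single i (1:k) with hB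
  set x : Fin n → (Fin (n+1) → k) := fun q => B (ρ q.succ) with hx
  set sg : k := ((Perm.sign ρ : ℤ) : k) * (-1 : k) ^ n with hsg
  have hsgne : sg ≠ 0 := by
    rcases Int.units_eq_one_or (Perm.sign ρ) with h | h <;>
      simp [hsg, h, pow_ne_zero, neg_ne_zero]
  have hmx : m x = sg • B (ρ 0) := lemD ρ
  -- value of m on x updated with a basis vector
  have hupd : ∀ (p : Fin n) (j : Fin (n+1)),
      m (Function.update x p (B j)) =
        if j = ρ p.succ then sg • B (ρ 0)
        else if j = ρ 0 then (-sg) • B (ρ p.succ) else 0 := by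
    intro p j
    by_cases h1 : j = ρ p.succ
    · subst h1
      rw [if_pos rfl]
      have : Function.update x p (B (ρ p.succ)) = x := by
        rw [hx]; exact Function.update_eq_self p x
      rw [this, hmx]
    · rw [if_neg h1]
      by_cases h2 : j = ρ 0
      · subst h2
        rw [if_pos rfl]
        set s : Fin (n+1) := ρ p.succ with hs
        have hsne : s ≠ ρ 0 := by
          simp [hs, EmbeddingLike.apply_eq_iff_eq, Fin.succ_ne_zero]
        have htuple : Function.update x p (B (ρ 0)) =
            fun q => B ((Equiv.swap s (ρ 0) * ρ) q.succ) := by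
          funext q
          by_cases hq : q = p
          · subst hq
            simp [Function.update_self, Perm.mul_apply, ← hs, Equiv.swap_apply_left]
          · rw [Function.update_of_ne hq]
            have h3 : ρ q.succ ≠ s := by
              rw [hs]
              exact fun hh => hq (Fin.succ_injective _ (ρ.injective hh))
            have h4 : ρ q.succ ≠ ρ 0 := by
              simp [EmbeddingLike.apply_eq_iff_eq, Fin.succ_ne_zero]
            simp [hx, Perm.mul_apply, Equiv.swap_apply_of_ne_of_ne h3 h4]
        rw [htuple, lemD]
        have h5 : (Equiv.swap s (ρ 0) * ρ) 0 = s := by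
          simp [Perm.mul_apply, Equiv.swap_apply_right]
        have h6 : Perm.sign (Equiv.swap s (ρ 0) * ρ) = - Perm.sign ρ := by
          rw [Equiv.Perm.sign_mul, Equiv.Perm.sign_swap hsne]
          simp
        rw [h5, h6]
        congr 1
        push_cast
        rw [hsg]
        ring
      · rw [if_neg h2]
        -- j = ρ q.succ for some q ≠ p
        obtain ⟨r, hr⟩ : ∃ r, ρ r = j := ⟨ρ.symm j, Equiv.apply_symm_apply ρ j⟩
        have hr0 : r ≠ 0 := by rintro rfl; exact h2 hr.symm
        obtain ⟨q, rfl⟩ : ∃ q : Fin n, r = q.succ := ⟨r.pred hr0, (Fin.succ_pred r hr0).symm⟩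
        have hqp : q ≠ p := by
          rintro rfl; exact h1 hr.symm
        refine halt _ q p hqp ?_
        rw [Function.update_of_ne hqp, Function.update_self]
        exact congrArg B hr
  -- expand the derivation identity
  have key := hder x
  have hexp : ∀ p : Fin n,
      m (Function.update x p (f p (x p))) =
        (f p (x p) (ρ p.succ)) • (sg • B (ρ 0)) + (f p (x p) (ρ 0)) • ((-sg) • B (ρ p.succ)) := by
    intro p
    have hv : f p (x p) = ∑ j, (f p (x p) j) • B j := by
      funext i
      simp [hB, Finset.sum_apply, Pi.single_apply]
    have hlin : m (Function.update x p (f p (x p))) =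
        ∑ j, (f p (x p) j) • m (Function.update x p (B j)) := by
      conv_lhs => rw [hv]
      rw [show m (Function.update x p (∑ j, (f p (x p) j) • B j)) =
        (m.toLinearMap x p) (∑ j, (f p (x p) j) • B j) from rfl]
      rw [map_sum]
      simp [MultilinearMap.toLinearMap]
    rw [hlin]
    have hne : ρ p.succ ≠ ρ 0 := by
      simp [EmbeddingLike.apply_eq_iff_eq, Fin.succ_ne_zero]
    rw [Finset.sum_eq_add_of_mem (ρ p.succ) (ρ 0) (Finset.mem_univ _) (Finset.mem_univ _) hne ?_]
    · rw [hupd p (ρ p.succ), hupd p (ρ 0), if_pos rfl, if_neg hne.symm, if_pos rfl]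
    · intro j _ hj
      rw [hupd p j, if_neg hj.1, if_neg hj.2, smul_zero]
  rw [hmx] at key
  rw [map_smul] at key
  have key2 : sg • f0 (B (ρ 0)) =
      sg • ∑ p : Fin n, ((f p (x p) (ρ p.succ)) • B (ρ 0) - (f p (x p) (ρ 0)) • B (ρ p.succ)) := by
    rw [key, Finset.smul_sum]
    refine Finset.sum_congr rfl fun p _ => ?_
    rw [hexp p]
    rw [smul_sub]
    rw [smul_comm sg, smul_comm sg]
    module
  exact smul_right_injective _ hsgne key2

theorem lemK
    (f0 : (Fin (n + 1) → k) →ₗ[k] (Fin (n + 1) → k))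
    (f : Fin n → ((Fin (n + 1) → k) →ₗ[k] (Fin (n + 1) → k)))
    (lemE : ∀ ρ : Equiv.Perm (Fin (n + 1)),
      f0 (Pi.single (ρ 0) (1 : k)) =
      ∑ p : Fin n,
        ((f p (Pi.single (ρ p.succ) (1 : k)) (ρ p.succ)) • (Pi.single (ρ 0) (1 : k) : Fin (n+1) → k)
          - (f p (Pi.single (ρ p.succ) (1 : k)) (ρ 0)) • (Pi.single (ρ p.succ) (1 : k) : Fin (n+1) → k))) :
    (∀ (p : Fin n) (t s : Fin (n+1)), s ≠ t →
        f p (Pi.single s (1:k)) t = - f0 (Pi.single t (1:k)) s) ∧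
    (∀ ρ : Equiv.Perm (Fin (n + 1)),
        f0 (Pi.single (ρ 0) (1:k)) (ρ 0) = ∑ p : Fin n, f p (Pi.single (ρ p.succ) (1:k)) (ρ p.succ)) := by
  classical
  have hsuccne : ∀ (ρ : Equiv.Perm (Fin (n+1))) (q : Fin n), ρ q.succ ≠ ρ 0 := by
    intro ρ q h
    exact Fin.succ_ne_zero q (ρ.injective h)
  constructor
  · intro p t s hst
    -- build ρ with ρ 0 = t, ρ p.succ = s
    set w : Fin (n+1) := Equiv.swap 0 t s with hw
    have hwne : w ≠ 0 := by
      rcases eq_or_ne s 0 with rfl | hs0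
      · rw [hw, Equiv.swap_apply_left]
        exact Ne.symm hst
      · rcases eq_or_ne s t with rfl | hst'
        · exact absurd rfl hst
        · rw [hw, Equiv.swap_apply_of_ne_of_ne hs0 hst']
          exact hs0
    set ρ : Equiv.Perm (Fin (n+1)) := Equiv.swap 0 t * Equiv.swap p.succ w with hρ
    have hρ0 : ρ 0 = t := by
      rw [hρ]
      simp only [Perm.mul_apply]
      rw [Equiv.swap_apply_of_ne_of_ne (Fin.succ_ne_zero p).symm (Ne.symm hwne),
        Equiv.swap_apply_left]
    have hρp : ρ p.succ = s := by
      rw [hρ]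
      simp only [Perm.mul_apply]
      rw [Equiv.swap_apply_left, hw, Equiv.swap_apply_self]
    have hE := congrFun (lemE ρ) s
    rw [hρ0] at hE
    rw [Finset.sum_apply] at hE
    rw [Finset.sum_eq_single_of_mem p (Finset.mem_univ p) ?_] at hE
    · rw [hρp] at hE
      simp only [Pi.sub_apply, Pi.smul_apply, smul_eq_mul] at hE
      rw [Pi.single_eq_of_ne hst, Pi.single_eq_same] at hE
      rw [mul_zero, mul_one, zero_sub] at hE
      rw [hE, neg_neg]
    · intro q _ hqp
      simp only [Pi.sub_apply, Pi.smul_apply, smul_eq_mul]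
      rw [Pi.single_eq_of_ne hst]
      have h2 : ρ q.succ ≠ s := by
        rw [← hρp]
        exact fun h => hqp (Fin.succ_injective _ (ρ.injective h))
      rw [Pi.single_eq_of_ne (Ne.symm h2)]
      ring
  · intro ρ
    have hE := congrFun (lemE ρ) (ρ 0)
    rw [Finset.sum_apply] at hE
    rw [hE]
    refine Finset.sum_congr rfl fun q _ => ?_
    simp only [Pi.sub_apply, Pi.smul_apply, smul_eq_mul]
    rw [Pi.single_eq_same, Pi.single_eq_of_ne (Ne.symm (hsuccne ρ q))]
    ring

end



/-- Every `(n+1)`-ary derivation `(f₀, f₁, …, fₙ)` of `A_{n+1}` decomposes as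
`(g₀, g, …, g) + (f₀*, f₁*, …, fₙ*)`, where each `fⱼ*` is diagonal in the standard basis,
`g₀, g` have zero diagonal, `(g₀, g, …, g)` is itself an `(n+1)`-ary derivation, and
`[g] = -[g₀]ᵀ`. -/
theorem Anp1_derivation_decomposition
    {k : Type*} [Field k] [IsAlgClosed k] [CharZero k] {n : ℕ} (hn : 2 ≤ n)
    (m : MultilinearMap k (fun _ : Fin n => (Fin (n + 1) → k)) (Fin (n + 1) → k))
    (halt : ∀ (x : Fin n → (Fin (n + 1) → k)) (p q : Fin n), p ≠ q → x p = x q → m x = 0)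
    (hbasis : ∀ i : Fin (n + 1),
      m (fun j => Pi.single (i.succAbove j) (1 : k)) =
        ((-1 : k) ^ (n + (i : ℕ))) • (Pi.single i (1 : k) : Fin (n + 1) → k))
    (f0 : (Fin (n + 1) → k) →ₗ[k] (Fin (n + 1) → k))
    (f : Fin n → ((Fin (n + 1) → k) →ₗ[k] (Fin (n + 1) → k)))
    (hder : ∀ x : Fin n → (Fin (n + 1) → k),
      f0 (m x) = ∑ i, m (Function.update x i (f i (x i)))) :
    ∃ (g0 g f0s : (Fin (n + 1) → k) →ₗ[k] (Fin (n + 1) → k))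
      (fs : Fin n → ((Fin (n + 1) → k) →ₗ[k] (Fin (n + 1) → k))),
      f0 = g0 + f0s ∧ (∀ p, f p = g + fs p) ∧
      -- each fⱼ* is diagonal: fⱼ*(eᵢ) is a scalar multiple of eᵢ
      (∀ i : Fin (n + 1), ∃ c : k, f0s (Pi.single i (1 : k)) = c • (Pi.single i (1 : k) : Fin (n + 1) → k)) ∧
      (∀ (p : Fin n) (i : Fin (n + 1)), ∃ c : k,
        fs p (Pi.single i (1 : k)) = c • (Pi.single i (1 : k) : Fin (n + 1) → k)) ∧
      -- g₀ and g have zero diagonal entries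
      (∀ i : Fin (n + 1), g0 (Pi.single i (1 : k)) i = 0) ∧
      (∀ i : Fin (n + 1), g (Pi.single i (1 : k)) i = 0) ∧
      -- (g₀, g, …, g) is an (n+1)-ary derivation
      (∀ x : Fin n → (Fin (n + 1) → k),
        g0 (m x) = ∑ i, m (Function.update x i (g (x i)))) ∧
      -- [g] = -[g₀]ᵀ
      (∀ i j : Fin (n + 1), g (Pi.single i (1 : k)) j = - g0 (Pi.single j (1 : k)) i) := by
  classical
  have hD := lemD m halt hbasis
  have hE := lemE m halt hbasis hD f0 f hder
  obtain ⟨hK2, hK3⟩ := lemK f0 f hE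
  set G0 : Matrix (Fin (n+1)) (Fin (n+1)) k :=
    Matrix.of fun j i => if i = j then 0 else f0 (Pi.single i 1) j with hG0
  set G : Matrix (Fin (n+1)) (Fin (n+1)) k :=
    Matrix.of fun j i => if i = j then 0 else -(f0 (Pi.single j 1) i) with hG
  have hmul : ∀ (M : Matrix (Fin (n+1)) (Fin (n+1)) k) (i j : Fin (n+1)),
      M.mulVecLin (Pi.single i (1:k)) j = M j i := by
    intro M i j
    rw [Matrix.mulVecLin_apply, Matrix.mulVec_single]
    exact mul_one _
  -- diagonality of the starred maps
  have hf0s_diag : ∀ i : Fin (n+1), (f0 - G0.mulVecLin) (Pi.single i 1) =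
      (f0 (Pi.single i 1) i) • (Pi.single i (1:k) : Fin (n+1) → k) := by
    intro i
    funext j
    rw [LinearMap.sub_apply, Pi.sub_apply, hmul]
    rcases eq_or_ne j i with rfl | hij
    · simp [hG0]
    · have h0 : G0 j i = f0 (Pi.single i 1) j := by
        rw [hG0]
        simp [Matrix.of_apply, if_neg (Ne.symm hij)]
      rw [h0, Pi.smul_apply, Pi.single_eq_of_ne hij, smul_zero, sub_self]
  have hfs_diag : ∀ (p : Fin n) (i : Fin (n+1)), (f p - G.mulVecLin) (Pi.single i 1) =
      (f p (Pi.single i 1) i) • (Pi.single i (1:k) : Fin (n+1) → k) := by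
    intro p i
    funext j
    rw [LinearMap.sub_apply, Pi.sub_apply, hmul]
    rcases eq_or_ne j i with rfl | hij
    · simp [hG]
    · have h1 : G j i = -(f0 (Pi.single j 1) i) := by
        rw [hG]
        simp [Matrix.of_apply, if_neg (Ne.symm hij)]
      rw [h1, Pi.smul_apply, Pi.single_eq_of_ne hij, smul_zero]
      rw [hK2 p j i (Ne.symm hij)]
      ring
  -- the starred tuple is a derivation (via multilinear extension)
  have hcomp : ∀ (h : Fin n → ((Fin (n + 1) → k) →ₗ[k] (Fin (n + 1) → k)))
      (x : Fin n → (Fin (n+1) → k)) (p : Fin n),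
      (m.compLinearMap (fun q => if q = p then h p else LinearMap.id)) x =
        m (Function.update x p (h p (x p))) := by
    intro h x p
    rw [MultilinearMap.compLinearMap_apply]
    congr 1
    funext q
    rcases eq_or_ne q p with rfl | hq
    · rw [Function.update_self, if_pos rfl]
    · rw [Function.update_of_ne hq, if_neg hq]
      rfl
  have hsmulslot : ∀ (x : Fin n → (Fin (n+1) → k)) (p : Fin n) (c : k),
      m (Function.update x p (c • x p)) = c • m x := by
    intro x p c
    have h1 : m (Function.update x p (c • x p)) = c • m (Function.update x p (x p)) :=
      (m.toLinearMap x p).map_smul c (x p)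
    rw [h1, Function.update_eq_self]
  have hstar : ∀ x : Fin n → (Fin (n + 1) → k),
      (f0 - G0.mulVecLin) (m x) = ∑ p, m (Function.update x p ((f p - G.mulVecLin) (x p))) := by
    suffices hFF : (f0 - G0.mulVecLin).compMultilinearMap m =
        ∑ p, m.compLinearMap (fun q => if q = p then (f p - G.mulVecLin) else LinearMap.id) by
      intro x
      have h := DFunLike.congr_fun hFF x
      rw [LinearMap.compMultilinearMap_apply, MultilinearMap.sum_apply] at h
      rw [h]
      exact Finset.sum_congr rfl fun p _ => hcomp (fun p => f p - G.mulVecLin) x p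
    refine Module.Basis.ext_multilinear (fun _ => Pi.basisFun k (Fin (n+1))) ?_
    intro v
    have hbv : (fun i => (Pi.basisFun k (Fin (n+1))) (v i)) =
        fun i => (Pi.single (v i) (1:k) : Fin (n+1) → k) := by
      funext i
      rw [Pi.basisFun_apply]
    rw [hbv]
    set x : Fin n → (Fin (n+1) → k) := fun i => Pi.single (v i) (1:k) with hx
    rw [LinearMap.compMultilinearMap_apply, MultilinearMap.sum_apply]
    have hRHS : ∀ p : Fin n,
        (m.compLinearMap (fun q => if q = p then (f p - G.mulVecLin) else LinearMap.id)) x =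
          (f p (Pi.single (v p) 1) (v p)) • m x := by
      intro p
      rw [hcomp (fun p => f p - G.mulVecLin) x p]
      have : (f p - G.mulVecLin) (x p) = (f p (Pi.single (v p) 1) (v p)) • x p := hfs_diag p (v p)
      rw [this, hsmulslot]
    by_cases hv : Function.Injective v
    · -- injective case: build the permutation
      obtain ⟨t, ht⟩ : ∃ t : Fin (n+1), ∀ q : Fin n, v q ≠ t := by
        by_contra hcon
        push_neg at hcon
        have hsurj : Function.Surjective v := fun t => hcon t
        have := Fintype.card_le_of_surjective v hsurj
        simp at this
      set F : Fin (n+1) → Fin (n+1) := Fin.cases t v with hF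
      have hFinj : Function.Injective F := by
        intro a b hab
        induction a using Fin.cases with
        | zero => induction b using Fin.cases with
          | zero => rfl
          | succ b =>
            rw [hF] at hab
            simp only [Fin.cases_zero, Fin.cases_succ] at hab
            exact absurd hab.symm (ht b)
        | succ a => induction b using Fin.cases with
          | zero =>
            rw [hF] at hab
            simp only [Fin.cases_zero, Fin.cases_succ] at hab
            exact absurd hab (ht a)
          | succ b =>
            rw [hF] at hab
            simp only [Fin.cases_succ] at hab
            rw [hv hab]
      set ρ : Equiv.Perm (Fin (n+1)) :=
        Equiv.ofBijective F (Finite.injective_iff_bijective.mp hFinj) with hρ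
      have hρs : ∀ q : Fin n, ρ q.succ = v q := by
        intro q
        rw [hρ]
        show F q.succ = v q
        rw [hF]
        exact Fin.cases_succ q
      have hρ0 : ρ 0 = t := by
        rw [hρ]
        show F 0 = t
        rw [hF]
        exact Fin.cases_zero
      have hxρ : x = fun q => Pi.single (ρ q.succ) (1:k) := by
        funext q
        rw [hρs q]
      have hmx : m x = (((Perm.sign ρ : ℤ) : k) * (-1 : k) ^ n) • (Pi.single t (1:k) : Fin (n+1) → k) := by
        rw [hxρ, hD ρ, hρ0]
      calc (f0 - G0.mulVecLin) (m x)
          = (((Perm.sign ρ : ℤ) : k) * (-1 : k) ^ n) •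
              ((f0 (Pi.single t 1) t) • (Pi.single t (1:k) : Fin (n+1) → k)) := by
            rw [hmx, map_smul, hf0s_diag t]
        _ = ∑ p : Fin n, (f p (Pi.single (v p) 1) (v p)) • m x := by
            rw [hmx]
            have hsum : f0 (Pi.single t (1:k)) t =
                ∑ p : Fin n, f p (Pi.single (v p) 1) (v p) := by
              have := hK3 ρ
              rw [hρ0] at this
              rw [this]
              exact Finset.sum_congr rfl fun p _ => by rw [hρs p]
            rw [hsum, Finset.sum_smul]
            rw [Finset.smul_sum]
            exact Finset.sum_congr rfl fun p _ => smul_comm _ _ _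
        _ = ∑ p : Fin n,
              (m.compLinearMap (fun q => if q = p then (f p - G.mulVecLin) else LinearMap.id)) x := by
            exact (Finset.sum_congr rfl fun p _ => (hRHS p).symm)
    · -- non-injective case: both sides vanish
      obtain ⟨p₁, q₁, hpq, hne⟩ := Function.not_injective_iff.mp hv
      have hmx : m x = 0 := by
        refine halt x p₁ q₁ hne ?_
        rw [hx]
        simp only
        rw [hpq]
      rw [hmx, map_zero]
      symm
      refine Finset.sum_eq_zero fun p _ => ?_
      rw [hRHS p, hmx, smul_zero]
  -- now assemble everything
  refine ⟨G0.mulVecLin, G.mulVecLin, f0 - G0.mulVecLin, fun p => f p - G.mulVecLin,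
    by module, fun p => by module, ?_, ?_, ?_, ?_, ?_, ?_⟩
  · intro i
    exact ⟨f0 (Pi.single i 1) i, hf0s_diag i⟩
  · intro p i
    exact ⟨f p (Pi.single i 1) i, hfs_diag p i⟩
  · intro i
    rw [hmul]
    simp [hG0]
  · intro i
    rw [hmul]
    simp [hG]

  · intro x
    have h1 := hder x
    have h2 := hstar x
    have h3 : G0.mulVecLin (m x) = f0 (m x) - (f0 - G0.mulVecLin) (m x) := by
      rw [LinearMap.sub_apply]
      abel
    rw [h3, h1, h2, ← Finset.sum_sub_distrib]
    refine Finset.sum_congr rfl fun p _ => ?_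
    have h4 : G.mulVecLin (x p) = f p (x p) - (f p - G.mulVecLin) (x p) := by
      rw [LinearMap.sub_apply]
      abel
    rw [h4]
    exact ((m.toLinearMap x p).map_sub (f p (x p)) ((f p - G.mulVecLin) (x p))).symm
  · intro i j
    rw [hmul, hmul]
    rcases eq_or_ne i j with rfl | hij
    · simp [hG, hG0]
    · rw [hG, hG0]
      simp only [Matrix.of_apply, if_neg hij, if_neg (Ne.symm hij)]
end

section
/- Let (d_0, d_1, ..., d_n) be an (n+1)-ary derivation of the simple n-ary Filippov algebra A_{n+1} such that each d_i is diagonal in the standard basis, with d_i(e_j) = d_i^j e_j. Then for all k, m ≤ n: d_k^k + d_m^m = d_k^m + d_m^k. -/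
/-- If `(d₀, d₁, …, dₙ)` is an `(n+1)`-ary derivation of `A_{n+1}` with each
`dᵢ` diagonal, `dᵢ(eⱼ) = dᵢʲ eⱼ`, then for all `k, m ≤ n` (paper's 1-based indices;
here `κ, μ : Fin n`) one has `d_κ^κ + d_μ^μ = d_κ^μ + d_μ^κ`. -/
theorem Anp1_diagonal_relation_one
    {k : Type*} [Field k] [CharZero k] {n : ℕ} (hn : 2 ≤ n)
    (m : MultilinearMap k (fun _ : Fin n => (Fin (n + 1) → k)) (Fin (n + 1) → k))
    (halt : ∀ (x : Fin n → (Fin (n + 1) → k)) (p q : Fin n), p ≠ q → x p = x q → m x = 0)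
    (hbasis : ∀ i : Fin (n + 1),
      m (fun j => Pi.single (i.succAbove j) (1 : k)) =
        ((-1 : k) ^ (n + (i : ℕ))) • (Pi.single i (1 : k) : Fin (n + 1) → k))
    (d0 : (Fin (n + 1) → k) →ₗ[k] (Fin (n + 1) → k))
    (d : Fin n → ((Fin (n + 1) → k) →ₗ[k] (Fin (n + 1) → k)))
    (dc : Fin n → Fin (n + 1) → k)
    (hdiag : ∀ (p : Fin n) (j : Fin (n + 1)),
      d p (Pi.single j (1 : k)) = dc p j • (Pi.single j (1 : k) : Fin (n + 1) → k))
    (hder : ∀ x : Fin n → (Fin (n + 1) → k),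
      d0 (m x) = ∑ i, m (Function.update x i (d i (x i)))) :
    ∀ κ μ : Fin n,
      dc κ κ.castSucc + dc μ μ.castSucc = dc κ μ.castSucc + dc μ κ.castSucc := by
  intro κ μ
  rcases eq_or_ne κ μ with rfl | hne
  · ring
  set x : Fin n → (Fin (n + 1) → k) :=
    fun j => Pi.single ((Fin.last n).succAbove j) (1 : k) with hx
  have hmx : m x = Pi.single (Fin.last n) (1 : k) := by
    have h := hbasis (Fin.last n)
    rw [hx, h, Fin.val_last, Even.neg_one_pow ⟨n, rfl⟩, one_smul]
  have hmx0 : m x ≠ 0 := by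
    rw [hmx]
    intro h
    have h2 := congrFun h (Fin.last n)
    simp at h2
  let A : (Fin (n + 1) → k) [⋀^Fin n]→ₗ[k] (Fin (n + 1) → k) :=
    ⟨m, fun v i j h hne => halt v i j hne h⟩
  have hswap : m (x ∘ Equiv.swap κ μ) = - m x := A.map_swap x hne
  have hval : ∀ σ : Equiv.Perm (Fin n),
      d0 (m (x ∘ σ)) = (∑ j, dc j ((σ j).castSucc)) • m (x ∘ σ) := by
    intro σ
    rw [hder, Finset.sum_smul]
    refine Finset.sum_congr rfl fun j _ => ?_
    have hd : d j ((x ∘ σ) j) = dc j ((σ j).castSucc) • (x ∘ σ) j := by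
      simp only [hx, Function.comp_apply, Fin.succAbove_last, hdiag]
    rw [hd, m.map_update_smul, Function.update_eq_self]
  have h1 : d0 (m x) = (∑ j, dc j (Fin.castSucc j)) • m x := by
    have := hval (Equiv.refl (Fin n))
    simpa using this
  have h2 : d0 (m x) = (∑ j, dc j ((Equiv.swap κ μ j).castSucc)) • m x := by
    have h := hval (Equiv.swap κ μ)
    rw [hswap, map_neg, smul_neg, neg_eq_iff_eq_neg, neg_neg] at h
    -- h : d0 (m x) = ... • m x
    exact h
  have hS : (∑ j, dc j (Fin.castSucc j)) = ∑ j, dc j ((Equiv.swap κ μ j).castSucc) := by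
    have := h1.symm.trans h2
    have h3 : ((∑ j, dc j (Fin.castSucc j)) - ∑ j, dc j ((Equiv.swap κ μ j).castSucc)) • m x = 0 := by
      rw [sub_smul, this, sub_self]
    rcases smul_eq_zero.mp h3 with h4 | h4
    · exact sub_eq_zero.mp h4
    · exact absurd h4 hmx0
  have hsum : ∑ j, (dc j (Fin.castSucc j) - dc j ((Equiv.swap κ μ j).castSucc)) = 0 := by
    rw [Finset.sum_sub_distrib, hS, sub_self]
  have hkey := Fintype.sum_eq_add κ μ hne
    (f := fun j => dc j (Fin.castSucc j) - dc j ((Equiv.swap κ μ j).castSucc))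
    (fun c hc => by simp only [Equiv.swap_apply_of_ne_of_ne hc.1 hc.2, sub_self])
  simp only [Equiv.swap_apply_left, Equiv.swap_apply_right] at hkey
  rw [hsum] at hkey
  linear_combination -hkey
end

section
/- Let (d_0, d_1, ..., d_n) be an (n+1)-ary derivation of the simple n-ary Filippov algebra A_{n+1} such that each d_i is diagonal in the standard basis, with d_i(e_j) = d_i^j e_j. Then for all m, k ≥ 2: d_{m-1}^k + d_{k-1}^m = d_{m-1}^m + d_{k-1}^k. -/
/-- If `(d₀, d₁, …, dₙ)` is an `(n+1)`-ary derivation of `A_{n+1}` with each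
`dᵢ` diagonal, `dᵢ(eⱼ) = dᵢʲ eⱼ`, then for all `m, k ≥ 2` (paper's 1-based indices; here
`μ, κ : Fin n` represent paper values `μ+2, κ+2`, so `d_{m-1}` is `d μ` and the basis
index `k` is `κ.succ`): `d_{m-1}^k + d_{k-1}^m = d_{m-1}^m + d_{k-1}^k`. -/
theorem Anp1_diagonal_relation_two
    {k : Type*} [Field k] [CharZero k] {n : ℕ} (hn : 2 ≤ n)
    (m : MultilinearMap k (fun _ : Fin n => (Fin (n + 1) → k)) (Fin (n + 1) → k))
    (halt : ∀ (x : Fin n → (Fin (n + 1) → k)) (p q : Fin n), p ≠ q → x p = x q → m x = 0)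
    (hbasis : ∀ i : Fin (n + 1),
      m (fun j => Pi.single (i.succAbove j) (1 : k)) =
        ((-1 : k) ^ (n + (i : ℕ))) • (Pi.single i (1 : k) : Fin (n + 1) → k))
    (d0 : (Fin (n + 1) → k) →ₗ[k] (Fin (n + 1) → k))
    (d : Fin n → ((Fin (n + 1) → k) →ₗ[k] (Fin (n + 1) → k)))
    (dc : Fin n → Fin (n + 1) → k)
    (hdiag : ∀ (p : Fin n) (j : Fin (n + 1)),
      d p (Pi.single j (1 : k)) = dc p j • (Pi.single j (1 : k) : Fin (n + 1) → k))
    (hder : ∀ x : Fin n → (Fin (n + 1) → k),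
      d0 (m x) = ∑ i, m (Function.update x i (d i (x i)))) :
    ∀ μ κ : Fin n, dc μ κ.succ + dc κ μ.succ = dc μ μ.succ + dc κ κ.succ := by
  intro μ κ
  rcases eq_or_ne μ κ with rfl | hμκ
  · ring
  -- the basis tuple missing e₀
  set x : Fin n → (Fin (n + 1) → k) := fun j => Pi.single (j.succ) (1 : k) with hxdef
  have hmx : m x = ((-1 : k) ^ n) • (Pi.single (0 : Fin (n + 1)) (1 : k) : Fin (n + 1) → k) := by
    have h := hbasis 0
    simpa [Fin.zero_succAbove, x] using h
  -- general term computation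
  have hterm : ∀ (v : Fin n → Fin (n + 1) → k) (q : Fin n) (c : k),
      d q (v q) = c • v q → m (Function.update v q (d q (v q))) = c • m v := by
    intro v q c h
    rw [h, m.map_update_smul, Function.update_eq_self]
  -- derivation at x
  have hS1 : d0 (m x) = (∑ q, dc q q.succ) • m x := by
    rw [hder, Finset.sum_smul]
    exact Finset.sum_congr rfl fun q _ => hterm x q (dc q q.succ) (hdiag q q.succ)
  -- swapped tuple
  set y : Fin n → Fin (n + 1) → k := fun j => x (Equiv.swap μ κ j) with hydef
  have hS2 : d0 (m y) = (∑ q, dc q ((Equiv.swap μ κ q).succ)) • m y := by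
    rw [hder, Finset.sum_smul]
    exact Finset.sum_congr rfl fun q _ =>
      hterm y q (dc q ((Equiv.swap μ κ q).succ)) (hdiag q ((Equiv.swap μ κ q).succ))
  -- alternating map
  let g : AlternatingMap k (Fin (n + 1) → k) (Fin (n + 1) → k) (Fin n) :=
    { m with map_eq_zero_of_eq' := fun v i j h hne => halt v i j hne h }
  have hmy : m y = - m x := g.map_swap x hμκ
  -- the two sums are equal
  have key : (∑ q, dc q q.succ) = ∑ q, dc q ((Equiv.swap μ κ q).succ) := by
    have h1 : (∑ q, dc q q.succ) • m x = (∑ q, dc q ((Equiv.swap μ κ q).succ)) • m x := by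
      have h := hS2
      rw [hmy, map_neg, hS1, smul_neg, neg_inj] at h
      exact h
    rw [hmx] at h1
    have h2 := congrFun h1 0
    simp only [Pi.smul_apply, Pi.single_eq_same, smul_eq_mul, mul_one] at h2
    exact mul_right_cancel₀ (pow_ne_zero n (neg_ne_zero.mpr (one_ne_zero))) h2
  -- extract the two differing terms
  have hzero : ∑ q ∈ ({μ, κ} : Finset (Fin n)),
      (dc q ((Equiv.swap μ κ q).succ) - dc q q.succ) = 0 := by
    rw [Finset.sum_subset (Finset.subset_univ _) (fun q _ hq => ?_)]
    · rw [Finset.sum_sub_distrib, ← key, sub_self]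
    · simp only [Finset.mem_insert, Finset.mem_singleton, not_or] at hq
      rw [Equiv.swap_apply_of_ne_of_ne hq.1 hq.2, sub_self]
  rw [Finset.sum_pair hμκ, Equiv.swap_apply_left, Equiv.swap_apply_right] at hzero
  linear_combination hzero
end

section
/- Let (d_0, d_1, ..., d_n) be an (n+1)-ary derivation of the simple n-ary Filippov algebra A_{n+1} such that each d_i (for 1 ≤ i ≤ n) is diagonal in the standard basis, d_i(e_j) = d_i^j e_j, and d_i(e_{n+1}) = 0 for all i ≥ 1. Then d_1 = d_2 = ... = d_n. -/
/-- If `(d₀, d₁, …, dₙ)` is an `(n+1)`-ary derivation of `A_{n+1}` with each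
`dᵢ` (for `i ≥ 1`) diagonal, `dᵢ(eⱼ) = dᵢʲ eⱼ`, and `dᵢ(e_{n+1}) = 0`, then
`d₁ = d₂ = ⋯ = dₙ`. -/
theorem Anp1_diagonal_derivation_parts_equal
    {k : Type*} [Field k] [CharZero k] {n : ℕ} (hn : 2 ≤ n)
    (m : MultilinearMap k (fun _ : Fin n => (Fin (n + 1) → k)) (Fin (n + 1) → k))
    (halt : ∀ (x : Fin n → (Fin (n + 1) → k)) (p q : Fin n), p ≠ q → x p = x q → m x = 0)
    (hbasis : ∀ i : Fin (n + 1),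
      m (fun j => Pi.single (i.succAbove j) (1 : k)) =
        ((-1 : k) ^ (n + (i : ℕ))) • (Pi.single i (1 : k) : Fin (n + 1) → k))
    (d0 : (Fin (n + 1) → k) →ₗ[k] (Fin (n + 1) → k))
    (d : Fin n → ((Fin (n + 1) → k) →ₗ[k] (Fin (n + 1) → k)))
    (dc : Fin n → Fin (n + 1) → k)
    (hdiag : ∀ (p : Fin n) (j : Fin (n + 1)),
      d p (Pi.single j (1 : k)) = dc p j • (Pi.single j (1 : k) : Fin (n + 1) → k))
    (hlast : ∀ p : Fin n, d p (Pi.single (Fin.last n) (1 : k)) = 0)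
    (hder : ∀ x : Fin n → (Fin (n + 1) → k),
      d0 (m x) = ∑ i, m (Function.update x i (d i (x i)))) :
    ∀ p q : Fin n, d p = d q := by
  classical
  -- package m as an alternating map
  set M : (Fin (n + 1) → k) [⋀^Fin n]→ₗ[k] (Fin (n + 1) → k) :=
    { toMultilinearMap := m,
      map_eq_zero_of_eq' := fun v i j heq hne => halt v i j hne heq } with hM
  have hMapp : ∀ x, M x = m x := fun _ => rfl
  have hs1 : ∀ j : Fin (n + 1), (Pi.single j (1 : k) : Fin (n + 1) → k) ≠ 0 := by
    intro j h
    exact one_ne_zero (α := k) (by simpa using congrFun h j)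
  -- dc at last is zero
  have hdcl : ∀ t : Fin n, dc t (Fin.last n) = 0 := by
    intro t
    have h := (hdiag t (Fin.last n)).symm.trans (hlast t)
    rcases smul_eq_zero.mp h with h | h
    · exact h
    · exact absurd h (hs1 _)
  -- evaluation of the derivation identity on tuples of basis vectors
  have eval : ∀ ι : Fin n → Fin (n + 1),
      d0 (m fun t => Pi.single (ι t) (1 : k)) =
        (∑ t, dc t (ι t)) • m (fun t => Pi.single (ι t) (1 : k)) := by
    intro ι
    rw [hder]
    rw [Finset.sum_smul]
    refine Finset.sum_congr rfl fun t _ => ?_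
    have h1 : d t (Pi.single (ι t) (1 : k)) =
        dc t (ι t) • (Pi.single (ι t) (1 : k) : Fin (n + 1) → k) := hdiag t (ι t)
    have h2 : Function.update (fun t => (Pi.single (ι t) (1 : k) : Fin (n + 1) → k)) t
        (Pi.single (ι t) (1 : k)) = fun t => Pi.single (ι t) (1 : k) :=
      Function.update_eq_self t _
    rw [show d t ((fun t => (Pi.single (ι t) (1 : k) : Fin (n + 1) → k)) t) =
        dc t (ι t) • (Pi.single (ι t) (1 : k) : Fin (n + 1) → k) from h1, m.map_update_smul]
    exact congrArg _ (congrArg m h2)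
  -- nonvanishing on permuted basis tuples
  have nz : ∀ (i : Fin (n + 1)) (e : Equiv.Perm (Fin n)),
      m (fun t => Pi.single (i.succAbove (e t)) (1 : k)) ≠ 0 := by
    intro i e
    have h1 : m (fun t => Pi.single (i.succAbove (e t)) (1 : k)) =
        M ((fun t => Pi.single (i.succAbove t) (1 : k)) ∘ e) := rfl
    rw [h1, AlternatingMap.map_perm, hMapp, hbasis]
    have hs : (Pi.single i (1 : k) : Fin (n + 1) → k) ≠ 0 := hs1 i
    have hne : ((-1 : k) ^ (n + (i : ℕ))) • (Pi.single i (1 : k) : Fin (n + 1) → k) ≠ 0 :=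
      smul_ne_zero (pow_ne_zero _ (by norm_num)) hs
    rcases Int.units_eq_one_or (Equiv.Perm.sign e) with h | h <;> rw [h] <;> simpa using hne
  -- key swap relation for injective-ish tuples with nonzero value
  have swaprel : ∀ (ι : Fin n → Fin (n + 1)) (r s : Fin n), r ≠ s →
      m (fun t => Pi.single (ι t) (1 : k)) ≠ 0 →
      dc r (ι s) + dc s (ι r) = dc r (ι r) + dc s (ι s) := by
    intro ι r s hrs hnz
    set x : Fin n → (Fin (n + 1) → k) := fun t => Pi.single (ι t) (1 : k) with hx
    have hswap : m (fun t => Pi.single (ι (Equiv.swap r s t)) (1 : k)) = - m x := by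
      have : (fun t => Pi.single (ι (Equiv.swap r s t)) (1 : k)) = x ∘ Equiv.swap r s := rfl
      rw [this]
      exact (M.map_swap x hrs)
    have e1 := eval ι
    have e2 := eval (ι ∘ Equiv.swap r s)
    have e2' : d0 (m (fun t => Pi.single (ι (Equiv.swap r s t)) (1:k))) =
        (∑ t, dc t (ι (Equiv.swap r s t))) • m (fun t => Pi.single (ι (Equiv.swap r s t)) (1:k)) := e2
    rw [hswap] at e2'
    rw [map_neg, e1, smul_neg, neg_inj] at e2'
    have hsum : (∑ t, dc t (ι t)) = ∑ t, dc t (ι (Equiv.swap r s t)) := by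
      have := sub_eq_zero.mpr e2'
      rw [← sub_smul] at this
      rcases smul_eq_zero.mp this with h | h
      · exact sub_eq_zero.mp h
      · exact absurd h hnz
    have hdiff : ∑ t, (dc t (ι (Equiv.swap r s t)) - dc t (ι t)) = 0 := by
      rw [Finset.sum_sub_distrib, ← hsum, sub_self]
    have hterm : ∀ t : Fin n, dc t (ι (Equiv.swap r s t)) - dc t (ι t) =
        (if t = r then dc r (ι s) - dc r (ι r) else 0) +
        (if t = s then dc s (ι r) - dc s (ι s) else 0) := by
      intro t
      by_cases h1 : t = r
      · subst h1
        rw [if_pos rfl, if_neg hrs, Equiv.swap_apply_left, add_zero]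
      · by_cases h2 : t = s
        · subst h2
          rw [if_neg h1, if_pos rfl, Equiv.swap_apply_right, zero_add]
        · rw [if_neg h1, if_neg h2, Equiv.swap_apply_of_ne_of_ne h1 h2, sub_self, add_zero]
    rw [Finset.sum_congr rfl (fun t _ => hterm t), Finset.sum_add_distrib,
        Finset.sum_ite_eq' Finset.univ r, Finset.sum_ite_eq' Finset.univ s,
        if_pos (Finset.mem_univ r), if_pos (Finset.mem_univ s)] at hdiff
    linear_combination hdiff
  -- main: dc r a = dc s a for r ≠ s
  have key : ∀ (r s : Fin n), r ≠ s → ∀ a : Fin (n + 1), dc r a = dc s a := by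
    intro r s hrs a
    by_cases ha : a = Fin.last n
    · rw [ha, hdcl, hdcl]
    · -- choose i ∉ {a, last}
      have hex : ∃ i : Fin (n + 1), i ≠ a ∧ i ≠ Fin.last n := by
        by_contra h
        push_neg at h
        have hsub : (Finset.univ : Finset (Fin (n + 1))) ⊆ {a, Fin.last n} := by
          intro i _
          rcases eq_or_ne i a with h1 | h1
          · simp [h1]
          · simp [h i h1]
        have hc := Finset.card_le_card hsub
        have : n + 1 ≤ 2 := by
          calc n + 1 = (Finset.univ : Finset (Fin (n+1))).card := by simp
            _ ≤ ({a, Fin.last n} : Finset (Fin (n+1))).card := hc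
            _ ≤ 2 := by
                refine (Finset.card_insert_le _ _).trans ?_
                simp
        omega
      obtain ⟨i, hia, hil⟩ := hex
      obtain ⟨q0, hq0⟩ := Fin.exists_succAbove_eq hia.symm
      obtain ⟨p0, hp0⟩ := Fin.exists_succAbove_eq hil.symm
      have hpq0 : p0 ≠ q0 := by
        intro h
        apply ha
        rw [← hq0, ← h, hp0]
      -- build a permutation e with e r = p0, e s = q0
      have hs' : Equiv.swap r p0 s ≠ p0 := by
        intro h
        have := (Equiv.swap r p0).injective (a₁ := s) (a₂ := r) (by rw [h, Equiv.swap_apply_left])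
        exact hrs this.symm
      set e : Equiv.Perm (Fin n) := (Equiv.swap r p0).trans (Equiv.swap (Equiv.swap r p0 s) q0)
        with he
      have her : e r = p0 := by
        simp only [he, Equiv.trans_apply, Equiv.swap_apply_left]
        exact Equiv.swap_apply_of_ne_of_ne hs'.symm hpq0
      have hes : e s = q0 := by
        simp only [he, Equiv.trans_apply]
        exact Equiv.swap_apply_left _ _
      have hnz := nz i e
      have hrel := swaprel (fun t => i.succAbove (e t)) r s hrs hnz
      simp only [her, hes, hp0, hq0] at hrel
      -- hrel : dc r a + dc s last = dc r last + dc s a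
      rw [hdcl, hdcl] at hrel
      linear_combination hrel
  intro p q
  rcases eq_or_ne p q with h | h
  · rw [h]
  · apply Module.Basis.ext (Pi.basisFun k (Fin (n + 1)))
    intro j
    have hb : (Pi.basisFun k (Fin (n + 1))) j = Pi.single j (1 : k) := by
      simp [Pi.basisFun_apply]
    rw [hb, hdiag, hdiag, key p q h j]
end

section
/- Every (n+1)-ary derivation (f_0, f_1, ..., f_n) of the simple (n+1)-dimensional n-ary Filippov algebra A_{n+1} over an algebraically closed field of characteristic zero decomposes as (f_0, f_1, ..., f_n) = (Σ_{j=1}^n h_j · id, h_1 · id, ..., h_n · id) + (d_0, d, ..., d), where h_1,...,h_n are scalars and d_0, d are linear maps whose matrices in the standard basis satisfy [d_0]^T + [d] = 0. -/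
namespace Anp1Aux

def tup (k : Type*) [Field k] {n : ℕ} (τ : Fin n → Fin (n+1)) : Fin n → Fin (n+1) → k :=
  fun j => Pi.single (τ j) 1

variable {k : Type*} [Field k] {n : ℕ}

lemma val_succAbove (i : Fin (n+1)) (p : Fin n) :
    ((i.succAbove p : Fin (n+1)) : ℕ) = if (p:ℕ) < (i:ℕ) then (p:ℕ) else (p:ℕ)+1 := by
  rcases lt_or_ge (Fin.castSucc p) i with h | h
  · have h' : (p:ℕ) < (i:ℕ) := by simpa [Fin.lt_def] using h
    rw [Fin.succAbove_of_castSucc_lt _ _ h]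
    simp [h']
  · have h' : (i:ℕ) ≤ (p:ℕ) := by simpa [Fin.le_def] using h
    rw [Fin.succAbove_of_le_castSucc _ _ h]
    simp [Fin.val_succ, Nat.not_lt.mpr h']

lemma m_swap (m : MultilinearMap k (fun _ : Fin n => (Fin (n + 1) → k)) (Fin (n + 1) → k))
    (halt : ∀ (x : Fin n → (Fin (n + 1) → k)) (p q : Fin n), p ≠ q → x p = x q → m x = 0)
    (x : Fin n → (Fin (n+1) → k)) {p q : Fin n} (h : p ≠ q) :
    m (x ∘ Equiv.swap p q) = - m x :=
  AlternatingMap.map_swap ⟨m, fun v i j hv hij => halt v i j hij hv⟩ x h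

lemma L1A (m : MultilinearMap k (fun _ : Fin n => (Fin (n + 1) → k)) (Fin (n + 1) → k))
    (halt : ∀ (x : Fin n → (Fin (n + 1) → k)) (p q : Fin n), p ≠ q → x p = x q → m x = 0)
    (hbasis : ∀ i : Fin (n + 1),
      m (fun j => Pi.single (i.succAbove j) (1 : k)) =
        ((-1 : k) ^ (n + (i : ℕ))) • (Pi.single i (1 : k) : Fin (n + 1) → k)) :
    ∀ (d : ℕ) (i : Fin (n+1)) (p : Fin n), (i:ℕ) ≤ (p:ℕ) → (p:ℕ) - (i:ℕ) = d →
    m (tup k (Function.update (i.succAbove) p i)) =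
      (-((-1:k) ^ (n + (i : ℕ)))) • (Pi.single (i.succAbove p) (1:k) : Fin (n+1) → k) := by
  intro d
  induction d with
  | zero =>
    intro i p hle hd
    have hip : (i:ℕ) = (p:ℕ) := by omega
    have hpn : (p:ℕ) < n := p.isLt
    set i' : Fin (n+1) := ⟨(i:ℕ)+1, by omega⟩ with hi'
    have funeq : Function.update (i.succAbove) p i = i'.succAbove := by
      funext j
      apply Fin.ext
      rcases eq_or_ne j p with rfl | hne
      · rw [Function.update_self, val_succAbove]
        show (i:ℕ) = (if (j:ℕ) < (i:ℕ)+1 then (j:ℕ) else (j:ℕ)+1)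
        split_ifs <;> omega
      · rw [Function.update_of_ne hne, val_succAbove, val_succAbove]
        have hjp : (j:ℕ) ≠ (p:ℕ) := fun hc => hne (Fin.ext hc)
        show (if (j:ℕ) < (i:ℕ) then (j:ℕ) else (j:ℕ)+1) = (if (j:ℕ) < (i:ℕ)+1 then (j:ℕ) else (j:ℕ)+1)
        split_ifs <;> omega
    have h1 : i.succAbove p = i' := by
      apply Fin.ext
      rw [val_succAbove]
      show (if (p:ℕ) < (i:ℕ) then (p:ℕ) else (p:ℕ)+1) = (i:ℕ)+1
      split_ifs <;> omega
    have h2 : (-((-1:k) ^ (n + (i:ℕ)))) = (-1:k) ^ (n + ((i':Fin (n+1)):ℕ)) := by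
      show (-((-1:k) ^ (n + (i:ℕ)))) = ((-1:k) ^ (n + ((i:ℕ)+1)))
      rw [show n + ((i:ℕ)+1) = (n + (i:ℕ)) + 1 by omega, pow_succ]
      ring
    rw [show tup k (Function.update (i.succAbove) p i) =
        (fun j => Pi.single (i'.succAbove j) (1:k)) by rw [funeq]; rfl]
    rw [hbasis i', h1, h2]
  | succ d ih =>
    intro i p hle hd
    have hlt : (i:ℕ) < (p:ℕ) := by omega
    have hpn : (p:ℕ) < n := p.isLt
    set i' : Fin (n+1) := ⟨(i:ℕ)+1, by omega⟩ with hi'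
    set ip : Fin n := ⟨(i:ℕ), by omega⟩ with hip
    have hipne : ip ≠ p := by
      intro hc
      have : (i:ℕ) = (p:ℕ) := congrArg Fin.val hc
      omega
    have hfun : Function.update (i'.succAbove) p i' =
        (Function.update (i.succAbove) p i) ∘ (Equiv.swap ip p) := by
      funext j
      apply Fin.ext
      rcases eq_or_ne j ip with rfl | hj1
      · rw [Function.comp_apply, Equiv.swap_apply_left, Function.update_self,
          Function.update_of_ne hipne, val_succAbove]
        show (if ((ip:Fin n):ℕ) < ((i':Fin (n+1)):ℕ) then ((ip:Fin n):ℕ) else ((ip:Fin n):ℕ)+1) = (i:ℕ)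
        show (if (i:ℕ) < (i:ℕ)+1 then (i:ℕ) else (i:ℕ)+1) = (i:ℕ)
        split_ifs <;> omega
      · rcases eq_or_ne j p with rfl | hj2
        · rw [Function.comp_apply, Equiv.swap_apply_right, Function.update_self,
            Function.update_of_ne hipne, val_succAbove]
          show ((i':Fin (n+1)):ℕ) = (if ((ip:Fin n):ℕ) < (i:ℕ) then ((ip:Fin n):ℕ) else ((ip:Fin n):ℕ)+1)
          show (i:ℕ)+1 = (if (i:ℕ) < (i:ℕ) then (i:ℕ) else (i:ℕ)+1)
          split_ifs <;> omega
        · rw [Function.comp_apply, Equiv.swap_apply_of_ne_of_ne hj1 hj2,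
            Function.update_of_ne hj2, Function.update_of_ne hj2,
            val_succAbove, val_succAbove]
          have h1 : (j:ℕ) ≠ (i:ℕ) := fun hc => hj1 (Fin.ext hc)
          have h2 : (j:ℕ) ≠ (p:ℕ) := fun hc => hj2 (Fin.ext hc)
          show (if (j:ℕ) < (i:ℕ)+1 then (j:ℕ) else (j:ℕ)+1) = (if (j:ℕ) < (i:ℕ) then (j:ℕ) else (j:ℕ)+1)
          split_ifs <;> omega
    have hswap : m (tup k (Function.update (i'.succAbove) p i')) =
        - m (tup k (Function.update (i.succAbove) p i)) := by
      rw [show tup k (Function.update (i'.succAbove) p i') =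
          tup k (Function.update (i.succAbove) p i) ∘ (Equiv.swap ip p) by rw [hfun]; rfl]
      exact m_swap m halt _ hipne
    have hih := ih i' p (by show (i:ℕ)+1 ≤ (p:ℕ); omega) (by show (p:ℕ) - ((i:ℕ)+1) = d; omega)
    have hvec : i'.succAbove p = i.succAbove p := by
      apply Fin.ext
      rw [val_succAbove, val_succAbove]
      show (if (p:ℕ) < (i:ℕ)+1 then (p:ℕ) else (p:ℕ)+1) = (if (p:ℕ) < (i:ℕ) then (p:ℕ) else (p:ℕ)+1)
      split_ifs <;> omega
    rw [hih, hvec] at hswap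
    have hsc' : ((-1:k) ^ (n + ((i':Fin (n+1)):ℕ))) = -((-1:k) ^ (n + (i:ℕ))) := by
      show ((-1:k) ^ (n + ((i:ℕ)+1))) = -((-1:k) ^ (n + (i:ℕ)))
      rw [show n + ((i:ℕ)+1) = (n + (i:ℕ)) + 1 by omega, pow_succ]
      ring
    have hval : m (tup k (Function.update (i.succAbove) p i))
        = ((-1:k) ^ (n + ((i':Fin (n+1)):ℕ))) • (Pi.single (i.succAbove p) (1:k) : Fin (n+1) → k) := by
      rw [← neg_neg (m (tup k (Function.update (i.succAbove) p i))), ← hswap, neg_smul, neg_neg]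
    rw [hval, hsc']

lemma L1B (m : MultilinearMap k (fun _ : Fin n => (Fin (n + 1) → k)) (Fin (n + 1) → k))
    (halt : ∀ (x : Fin n → (Fin (n + 1) → k)) (p q : Fin n), p ≠ q → x p = x q → m x = 0)
    (hbasis : ∀ i : Fin (n + 1),
      m (fun j => Pi.single (i.succAbove j) (1 : k)) =
        ((-1 : k) ^ (n + (i : ℕ))) • (Pi.single i (1 : k) : Fin (n + 1) → k)) :
    ∀ (d : ℕ) (i : Fin (n+1)) (p : Fin n), (p:ℕ) < (i:ℕ) → (i:ℕ) - (p:ℕ) - 1 = d →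
    m (tup k (Function.update (i.succAbove) p i)) =
      (-((-1:k) ^ (n + (i : ℕ)))) • (Pi.single (i.succAbove p) (1:k) : Fin (n+1) → k) := by
  intro d
  induction d with
  | zero =>
    intro i p hlt hd
    have hip : (i:ℕ) = (p:ℕ)+1 := by omega
    set i' : Fin (n+1) := ⟨(p:ℕ), by omega⟩ with hi'
    have funeq : Function.update (i.succAbove) p i = i'.succAbove := by
      funext j
      apply Fin.ext
      rcases eq_or_ne j p with rfl | hne
      · rw [Function.update_self, val_succAbove]
        show (i:ℕ) = (if (j:ℕ) < (j:ℕ) then (j:ℕ) else (j:ℕ)+1)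
        split_ifs <;> omega
      · rw [Function.update_of_ne hne, val_succAbove, val_succAbove]
        have hjp : (j:ℕ) ≠ (p:ℕ) := fun hc => hne (Fin.ext hc)
        show (if (j:ℕ) < (i:ℕ) then (j:ℕ) else (j:ℕ)+1) = (if (j:ℕ) < (p:ℕ) then (j:ℕ) else (j:ℕ)+1)
        split_ifs <;> omega
    have h1 : i.succAbove p = i' := by
      apply Fin.ext
      rw [val_succAbove]
      show (if (p:ℕ) < (i:ℕ) then (p:ℕ) else (p:ℕ)+1) = (p:ℕ)
      split_ifs <;> omega
    have h2 : (-((-1:k) ^ (n + (i:ℕ)))) = (-1:k) ^ (n + ((i':Fin (n+1)):ℕ)) := by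
      show (-((-1:k) ^ (n + (i:ℕ)))) = ((-1:k) ^ (n + (p:ℕ)))
      rw [show n + (i:ℕ) = (n + (p:ℕ)) + 1 by omega, pow_succ]
      ring
    rw [show tup k (Function.update (i.succAbove) p i) =
        (fun j => Pi.single (i'.succAbove j) (1:k)) by rw [funeq]; rfl]
    rw [hbasis i', h1, h2]
  | succ d ih =>
    intro i p hlt hd
    have hgt : (p:ℕ)+1 < (i:ℕ) := by omega
    have hin : (i:ℕ) ≤ n := by omega
    set i' : Fin (n+1) := ⟨(i:ℕ)-1, by omega⟩ with hi'
    set q : Fin n := ⟨(i:ℕ)-1, by omega⟩ with hq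
    have hqp : q ≠ p := by
      intro hc
      have : (i:ℕ)-1 = (p:ℕ) := congrArg Fin.val hc
      omega
    have hfun : Function.update (i'.succAbove) p i' =
        (Function.update (i.succAbove) p i) ∘ (Equiv.swap p q) := by
      funext j
      apply Fin.ext
      rcases eq_or_ne j p with rfl | hj1
      · rw [Function.comp_apply, Equiv.swap_apply_left, Function.update_self,
          Function.update_of_ne hqp, val_succAbove]
        show ((i:ℕ)-1) = (if (i:ℕ)-1 < (i:ℕ) then (i:ℕ)-1 else (i:ℕ)-1+1)
        split_ifs <;> omega
      · rcases eq_or_ne j q with rfl | hj2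
        · rw [Function.comp_apply, Equiv.swap_apply_right, Function.update_self,
            Function.update_of_ne hj1, val_succAbove]
          show (if (i:ℕ)-1 < (i:ℕ)-1 then (i:ℕ)-1 else (i:ℕ)-1+1) = (i:ℕ)
          split_ifs <;> omega
        · rw [Function.comp_apply, Equiv.swap_apply_of_ne_of_ne hj1 hj2,
            Function.update_of_ne hj1, Function.update_of_ne hj1,
            val_succAbove, val_succAbove]
          have h1 : (j:ℕ) ≠ (p:ℕ) := fun hc => hj1 (Fin.ext hc)
          have h2 : (j:ℕ) ≠ (i:ℕ)-1 := fun hc => hj2 (Fin.ext hc)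
          show (if (j:ℕ) < (i:ℕ)-1 then (j:ℕ) else (j:ℕ)+1) = (if (j:ℕ) < (i:ℕ) then (j:ℕ) else (j:ℕ)+1)
          split_ifs <;> omega
    have hswap : m (tup k (Function.update (i'.succAbove) p i')) =
        - m (tup k (Function.update (i.succAbove) p i)) := by
      rw [show tup k (Function.update (i'.succAbove) p i') =
          tup k (Function.update (i.succAbove) p i) ∘ (Equiv.swap p q) by rw [hfun]; rfl]
      exact m_swap m halt _ (Ne.symm hqp)
    have hih := ih i' p (by show (p:ℕ) < (i:ℕ)-1; omega) (by show (i:ℕ)-1 - (p:ℕ) - 1 = d; omega)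
    have hvec : i'.succAbove p = i.succAbove p := by
      apply Fin.ext
      rw [val_succAbove, val_succAbove]
      show (if (p:ℕ) < (i:ℕ)-1 then (p:ℕ) else (p:ℕ)+1) = (if (p:ℕ) < (i:ℕ) then (p:ℕ) else (p:ℕ)+1)
      split_ifs <;> omega
    rw [hih, hvec] at hswap
    have hsc' : ((-1:k) ^ (n + ((i':Fin (n+1)):ℕ))) = -((-1:k) ^ (n + (i:ℕ))) := by
      show ((-1:k) ^ (n + ((i:ℕ)-1))) = -((-1:k) ^ (n + (i:ℕ)))
      rw [show n + (i:ℕ) = (n + ((i:ℕ)-1)) + 1 by omega, pow_succ]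
      ring
    have hval : m (tup k (Function.update (i.succAbove) p i))
        = ((-1:k) ^ (n + ((i':Fin (n+1)):ℕ))) • (Pi.single (i.succAbove p) (1:k) : Fin (n+1) → k) := by
      rw [← neg_neg (m (tup k (Function.update (i.succAbove) p i))), ← hswap, neg_smul, neg_neg]
    rw [hval, hsc']

lemma L1 (m : MultilinearMap k (fun _ : Fin n => (Fin (n + 1) → k)) (Fin (n + 1) → k))
    (halt : ∀ (x : Fin n → (Fin (n + 1) → k)) (p q : Fin n), p ≠ q → x p = x q → m x = 0)
    (hbasis : ∀ i : Fin (n + 1),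
      m (fun j => Pi.single (i.succAbove j) (1 : k)) =
        ((-1 : k) ^ (n + (i : ℕ))) • (Pi.single i (1 : k) : Fin (n + 1) → k))
    (i : Fin (n+1)) (p : Fin n) :
    m (tup k (Function.update (i.succAbove) p i)) =
      (-((-1:k) ^ (n + (i : ℕ)))) • (Pi.single (i.succAbove p) (1:k) : Fin (n+1) → k) := by
  rcases le_or_gt (i:ℕ) (p:ℕ) with h | h
  · exact L1A m halt hbasis _ i p h rfl
  · exact L1B m halt hbasis _ i p h rfl



lemma cover {τ : Fin n → Fin (n+1)} (hinj : Function.Injective τ) {i : Fin (n+1)}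
    (hne : ∀ j, τ j ≠ i) {t : Fin (n+1)} (ht : t ≠ i) : ∃ q, τ q = t := by
  classical
  have hcard : (Finset.image τ Finset.univ).card = n := by
    rw [Finset.card_image_of_injective _ hinj, Finset.card_univ, Fintype.card_fin]
  have hsub : Finset.image τ Finset.univ ⊆ Finset.univ.erase i := by
    intro x hx
    rcases Finset.mem_image.mp hx with ⟨j, _, rfl⟩
    exact Finset.mem_erase.mpr ⟨hne j, Finset.mem_univ _⟩
  have hcard2 : (Finset.univ.erase i).card = n := by
    rw [Finset.card_erase_of_mem (Finset.mem_univ _), Finset.card_univ, Fintype.card_fin]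
    omega
  have heq : Finset.image τ Finset.univ = Finset.univ.erase i :=
    Finset.eq_of_subset_of_card_le hsub (by omega)
  have : t ∈ Finset.image τ Finset.univ := by
    rw [heq]; exact Finset.mem_erase.mpr ⟨ht, Finset.mem_univ _⟩
  rcases Finset.mem_image.mp this with ⟨q, _, hq⟩
  exact ⟨q, hq⟩

lemma star (m : MultilinearMap k (fun _ : Fin n => (Fin (n + 1) → k)) (Fin (n + 1) → k))
    (halt : ∀ (x : Fin n → (Fin (n + 1) → k)) (p q : Fin n), p ≠ q → x p = x q → m x = 0)
    (f0 : (Fin (n + 1) → k) →ₗ[k] (Fin (n + 1) → k))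
    (f : Fin n → ((Fin (n + 1) → k) →ₗ[k] (Fin (n + 1) → k)))
    (hder : ∀ x : Fin n → (Fin (n + 1) → k),
      f0 (m x) = ∑ i, m (Function.update x i (f i (x i))))
    (i : Fin (n+1)) (τ : Fin n → Fin (n+1))
    (hinj : Function.Injective τ) (hne : ∀ j, τ j ≠ i) :
    f0 (m (tup k τ)) =
      (∑ p, f p (Pi.single (τ p) (1:k) : Fin (n+1) → k) (τ p)) • m (tup k τ)
      + ∑ p, (f p (Pi.single (τ p) (1:k) : Fin (n+1) → k) i) • m (tup k (Function.update τ p i)) := by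
  classical
  rw [hder]
  have key : ∀ p, m (Function.update (tup k τ) p (f p ((tup k τ) p)))
      = (f p (Pi.single (τ p) (1:k) : Fin (n+1) → k) (τ p)) • m (tup k τ)
        + (f p (Pi.single (τ p) (1:k) : Fin (n+1) → k) i) • m (tup k (Function.update τ p i)) := by
    intro p
    set v : Fin (n+1) → k := f p (Pi.single (τ p) (1:k) : Fin (n+1) → k) with hv
    have hvsum : v = ∑ t : Fin (n+1), v t • (Pi.single t (1:k) : Fin (n+1) → k) := by
      conv_lhs => rw [← Finset.univ_sum_single v]
      apply Finset.sum_congr rfl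
      intro t _
      rw [← Pi.single_smul, smul_eq_mul, mul_one]
    have hupd : (tup k τ) p = Pi.single (τ p) (1:k) := rfl
    rw [hupd, ← hv]
    conv_lhs => rw [hvsum]
    rw [m.map_update_sum]
    have hterm : ∀ t : Fin (n+1),
        m (Function.update (tup k τ) p (v t • (Pi.single t (1:k) : Fin (n+1) → k)))
          = v t • m (Function.update (tup k τ) p (Pi.single t (1:k) : Fin (n+1) → k)) :=
      fun t => m.map_update_smul _ p _ _
    simp only [hterm]
    have hvanish : ∀ t ∈ (Finset.univ : Finset (Fin (n+1))), t ∉ ({τ p, i} : Finset (Fin (n+1))) →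
        v t • m (Function.update (tup k τ) p (Pi.single t (1:k) : Fin (n+1) → k)) = 0 := by
      intro t _ hnt
      simp only [Finset.mem_insert, Finset.mem_singleton, not_or] at hnt
      obtain ⟨q, hq⟩ := cover hinj hne hnt.2
      have hqp : q ≠ p := by
        intro hc; rw [hc] at hq; exact hnt.1 hq.symm
      have := halt (Function.update (tup k τ) p (Pi.single t (1:k) : Fin (n+1) → k)) p q
        (Ne.symm hqp)
        (by rw [Function.update_self, Function.update_of_ne hqp]
            show (Pi.single t (1:k) : Fin (n+1) → k) = (Pi.single (τ q) (1:k) : Fin (n+1) → k)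
            rw [hq])
      rw [this, smul_zero]
    have hsum : ∑ t : Fin (n+1),
        v t • m (Function.update (tup k τ) p (Pi.single t (1:k) : Fin (n+1) → k))
        = ∑ t ∈ ({τ p, i} : Finset (Fin (n+1))),
          v t • m (Function.update (tup k τ) p (Pi.single t (1:k) : Fin (n+1) → k)) :=
      (Finset.sum_subset (Finset.subset_univ _) hvanish).symm
    rw [hsum, Finset.sum_pair (hne p)]
    have h1 : Function.update (tup k τ) p (Pi.single (τ p) (1:k) : Fin (n+1) → k) = tup k τ :=
      Function.update_eq_self p (tup k τ)
    have h2 : Function.update (tup k τ) p (Pi.single i (1:k) : Fin (n+1) → k)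
        = tup k (Function.update τ p i) := by
      funext j
      rcases eq_or_ne j p with rfl | hj
      · rw [Function.update_self]
        show (Pi.single i (1:k) : Fin (n+1) → k)
            = (Pi.single (Function.update τ j i j) (1:k) : Fin (n+1) → k)
        rw [Function.update_self]
      · rw [Function.update_of_ne hj]
        show (Pi.single (τ j) (1:k) : Fin (n+1) → k)
            = (Pi.single (Function.update τ p i j) (1:k) : Fin (n+1) → k)
        rw [Function.update_of_ne hj]
    rw [h1, h2]
  simp only [key]
  rw [Finset.sum_add_distrib, Finset.sum_smul]


lemma S_gen (m : MultilinearMap k (fun _ : Fin n => (Fin (n + 1) → k)) (Fin (n + 1) → k))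
    (halt : ∀ (x : Fin n → (Fin (n + 1) → k)) (p q : Fin n), p ≠ q → x p = x q → m x = 0)
    (f0 : (Fin (n + 1) → k) →ₗ[k] (Fin (n + 1) → k))
    (f : Fin n → ((Fin (n + 1) → k) →ₗ[k] (Fin (n + 1) → k)))
    (hder : ∀ x : Fin n → (Fin (n + 1) → k),
      f0 (m x) = ∑ i, m (Function.update x i (f i (x i))))
    (i : Fin (n+1)) (τ : Fin n → Fin (n+1))
    (hinj : Function.Injective τ) (hne : ∀ j, τ j ≠ i)
    (c : k) (hc : c ≠ 0)
    (hm : m (tup k τ) = c • (Pi.single i (1:k) : Fin (n+1) → k))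
    (hupd : ∀ r, m (tup k (Function.update τ r i))
      = (-c) • (Pi.single (τ r) (1:k) : Fin (n+1) → k)) :
    (f0 (Pi.single i (1:k) : Fin (n+1) → k) i
      = ∑ r, f r (Pi.single (τ r) (1:k) : Fin (n+1) → k) (τ r))
    ∧ ∀ p, f0 (Pi.single i (1:k) : Fin (n+1) → k) (τ p)
      = -(f p (Pi.single (τ p) (1:k) : Fin (n+1) → k) i) := by
  classical
  have hstar := star m halt f0 f hder i τ hinj hne
  rw [hm] at hstar
  simp only [hupd] at hstar
  rw [map_smul] at hstar
  constructor
  · have h1 := congrFun hstar i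
    simp only [Pi.smul_apply, Pi.add_apply, Finset.sum_apply, Pi.single_eq_same,
      smul_eq_mul, mul_one] at h1
    have hz : ∑ r, (f r (Pi.single (τ r) (1:k) : Fin (n+1) → k) i)
        * (-c * (Pi.single (τ r) (1:k) : Fin (n+1) → k) i) = 0 :=
      Finset.sum_eq_zero (fun r _ => by
        rw [Pi.single_eq_of_ne (Ne.symm (hne r)), mul_zero, mul_zero])
    rw [hz, add_zero] at h1
    apply mul_left_cancel₀ hc
    rw [h1]
    ring
  · intro p
    have h2 := congrFun hstar (τ p)
    simp only [Pi.smul_apply, Pi.add_apply, Finset.sum_apply, smul_eq_mul] at h2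
    rw [Pi.single_eq_of_ne (hne p)] at h2
    have hsum : ∑ r, (f r (Pi.single (τ r) (1:k) : Fin (n+1) → k) i)
        * (-c * (Pi.single (τ r) (1:k) : Fin (n+1) → k) (τ p))
        = (f p (Pi.single (τ p) (1:k) : Fin (n+1) → k) i)
          * (-c * (Pi.single (τ p) (1:k) : Fin (n+1) → k) (τ p)) := by
      apply Finset.sum_eq_single_of_mem p (Finset.mem_univ p)
      intro r _ hr
      rw [Pi.single_eq_of_ne (fun hx => hr (hinj hx).symm), mul_zero, mul_zero]
    rw [hsum, Pi.single_eq_same] at h2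
    apply mul_left_cancel₀ hc
    rw [h2]
    ring


lemma eps_ne (i : Fin (n+1)) : ((-1:k) ^ (n + (i:ℕ))) ≠ 0 := by
  apply pow_ne_zero
  intro hc
  have : (1:k) = 0 := by linear_combination -hc
  exact one_ne_zero this

lemma S_id (m : MultilinearMap k (fun _ : Fin n => (Fin (n + 1) → k)) (Fin (n + 1) → k))
    (halt : ∀ (x : Fin n → (Fin (n + 1) → k)) (p q : Fin n), p ≠ q → x p = x q → m x = 0)
    (hbasis : ∀ i : Fin (n + 1),
      m (fun j => Pi.single (i.succAbove j) (1 : k)) =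
        ((-1 : k) ^ (n + (i : ℕ))) • (Pi.single i (1 : k) : Fin (n + 1) → k))
    (f0 : (Fin (n + 1) → k) →ₗ[k] (Fin (n + 1) → k))
    (f : Fin n → ((Fin (n + 1) → k) →ₗ[k] (Fin (n + 1) → k)))
    (hder : ∀ x : Fin n → (Fin (n + 1) → k),
      f0 (m x) = ∑ i, m (Function.update x i (f i (x i))))
    (i : Fin (n+1)) :
    (f0 (Pi.single i (1:k) : Fin (n+1) → k) i
      = ∑ r, f r (Pi.single (i.succAbove r) (1:k) : Fin (n+1) → k) (i.succAbove r))
    ∧ ∀ p, f0 (Pi.single i (1:k) : Fin (n+1) → k) (i.succAbove p)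
      = -(f p (Pi.single (i.succAbove p) (1:k) : Fin (n+1) → k) i) := by
  exact S_gen m halt f0 f hder i (i.succAbove)
    (Fin.succAbove_right_injective)
    (fun j => Fin.succAbove_ne i j)
    ((-1:k) ^ (n + (i:ℕ))) (eps_ne i)
    (hbasis i)
    (fun r => L1 m halt hbasis i r)

lemma S_swap (m : MultilinearMap k (fun _ : Fin n => (Fin (n + 1) → k)) (Fin (n + 1) → k))
    (halt : ∀ (x : Fin n → (Fin (n + 1) → k)) (p q : Fin n), p ≠ q → x p = x q → m x = 0)
    (hbasis : ∀ i : Fin (n + 1),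
      m (fun j => Pi.single (i.succAbove j) (1 : k)) =
        ((-1 : k) ^ (n + (i : ℕ))) • (Pi.single i (1 : k) : Fin (n + 1) → k))
    (f0 : (Fin (n + 1) → k) →ₗ[k] (Fin (n + 1) → k))
    (f : Fin n → ((Fin (n + 1) → k) →ₗ[k] (Fin (n + 1) → k)))
    (hder : ∀ x : Fin n → (Fin (n + 1) → k),
      f0 (m x) = ∑ i, m (Function.update x i (f i (x i))))
    (i : Fin (n+1)) (p q : Fin n) (hpq : p ≠ q) :
    (f0 (Pi.single i (1:k) : Fin (n+1) → k) i
      = ∑ r, f r (Pi.single (i.succAbove (Equiv.swap p q r)) (1:k) : Fin (n+1) → k)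
          (i.succAbove (Equiv.swap p q r)))
    ∧ ∀ r, f0 (Pi.single i (1:k) : Fin (n+1) → k) (i.succAbove (Equiv.swap p q r))
      = -(f r (Pi.single (i.succAbove (Equiv.swap p q r)) (1:k) : Fin (n+1) → k) i) := by
  have hinj : Function.Injective (fun j => i.succAbove (Equiv.swap p q j)) :=
    fun a b hab => (Equiv.swap p q).injective (Fin.succAbove_right_injective hab)
  have hm : m (tup k (fun j => i.succAbove (Equiv.swap p q j)))
      = (-((-1:k) ^ (n + (i:ℕ)))) • (Pi.single i (1:k) : Fin (n+1) → k) := by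
    have hcomp : tup k (fun j => i.succAbove (Equiv.swap p q j))
        = tup k (i.succAbove) ∘ (Equiv.swap p q) := rfl
    rw [hcomp, m_swap m halt _ hpq]
    have : m (tup k (i.succAbove))
        = ((-1:k) ^ (n + (i:ℕ))) • (Pi.single i (1:k) : Fin (n+1) → k) := hbasis i
    rw [this, neg_smul]
  have hupd : ∀ r, m (tup k (Function.update (fun j => i.succAbove (Equiv.swap p q j)) r i))
      = (-(-((-1:k) ^ (n + (i:ℕ)))))
        • (Pi.single (i.succAbove (Equiv.swap p q r)) (1:k) : Fin (n+1) → k) := by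
    intro r
    have hcomp : Function.update (fun j => i.succAbove (Equiv.swap p q j)) r i
        = (Function.update (i.succAbove) (Equiv.swap p q r) i) ∘ (Equiv.swap p q) := by
      funext j
      rcases eq_or_ne j r with rfl | hj
      · rw [Function.update_self, Function.comp_apply, Function.update_self]
      · rw [Function.update_of_ne hj, Function.comp_apply,
          Function.update_of_ne ((Equiv.swap p q).injective.ne hj)]
    have hcomp2 : tup k (Function.update (fun j => i.succAbove (Equiv.swap p q j)) r i)
        = tup k (Function.update (i.succAbove) (Equiv.swap p q r) i) ∘ (Equiv.swap p q) := by
      rw [hcomp]; rfl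
    rw [hcomp2, m_swap m halt _ hpq, L1 m halt hbasis i (Equiv.swap p q r), neg_smul, neg_neg,
      neg_neg]
  exact S_gen m halt f0 f hder i (fun j => i.succAbove (Equiv.swap p q j)) hinj
    (fun j => Fin.succAbove_ne i _)
    (-((-1:k) ^ (n + (i:ℕ)))) (neg_ne_zero.mpr (eps_ne i))
    hm hupd


/-- difference of diagonal entries of two of the `f`'s -/
def Dg (f : Fin n → ((Fin (n + 1) → k) →ₗ[k] (Fin (n + 1) → k))) (p q : Fin n)
    (a : Fin (n+1)) : k :=
  f p (Pi.single a 1) a - f q (Pi.single a 1) a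

variable (m : MultilinearMap k (fun _ : Fin n => (Fin (n + 1) → k)) (Fin (n + 1) → k))
    (halt : ∀ (x : Fin n → (Fin (n + 1) → k)) (p q : Fin n), p ≠ q → x p = x q → m x = 0)
    (hbasis : ∀ i : Fin (n + 1),
      m (fun j => Pi.single (i.succAbove j) (1 : k)) =
        ((-1 : k) ^ (n + (i : ℕ))) • (Pi.single i (1 : k) : Fin (n + 1) → k))
    (f0 : (Fin (n + 1) → k) →ₗ[k] (Fin (n + 1) → k))
    (f : Fin n → ((Fin (n + 1) → k) →ₗ[k] (Fin (n + 1) → k)))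
    (hder : ∀ x : Fin n → (Fin (n + 1) → k),
      f0 (m x) = ∑ i, m (Function.update x i (f i (x i))))

include m halt hbasis f0 hder in
/-- off-diagonal relation: `A_r[i,s] = -B[s,i]` for all `r`, `s ≠ i`. -/
lemma Roff (i s : Fin (n+1)) (hsi : s ≠ i) (r : Fin n) :
    f r (Pi.single s (1:k) : Fin (n+1) → k) i
      = -(f0 (Pi.single i (1:k) : Fin (n+1) → k) s) := by
  obtain ⟨p, hp⟩ := Fin.exists_succAbove_eq hsi
  rcases eq_or_ne r p with rfl | hrp
  · have h := (S_id m halt hbasis f0 f hder i).2 r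
    rw [hp] at h
    rw [h, neg_neg]
  · have h := (S_swap m halt hbasis f0 f hder i p r hrp.symm).2 r
    rw [Equiv.swap_apply_right, hp] at h
    rw [h, neg_neg]

include m halt hbasis f0 hder in
/-- diagonal swap relation via `Dg`. -/
lemma Dswap (i : Fin (n+1)) (p q : Fin n) (hpq : p ≠ q) :
    Dg f p q (i.succAbove p) = Dg f p q (i.succAbove q) := by
  have h1 := (S_id m halt hbasis f0 f hder i).1
  have h2 := (S_swap m halt hbasis f0 f hder i p q hpq).1
  have h3 : ∑ r, (f r (Pi.single (i.succAbove (Equiv.swap p q r)) (1:k) : Fin (n+1) → k)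
        (i.succAbove (Equiv.swap p q r))
      - f r (Pi.single (i.succAbove r) (1:k) : Fin (n+1) → k) (i.succAbove r)) = 0 := by
    rw [Finset.sum_sub_distrib, ← h1, ← h2, sub_self]
  have h4 : ∑ r ∈ ({p, q} : Finset (Fin n)),
      (f r (Pi.single (i.succAbove (Equiv.swap p q r)) (1:k) : Fin (n+1) → k)
        (i.succAbove (Equiv.swap p q r))
      - f r (Pi.single (i.succAbove r) (1:k) : Fin (n+1) → k) (i.succAbove r)) = 0 := by
    rw [Finset.sum_subset (Finset.subset_univ _) ?van, h3]
    case van =>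
      intro r _ hr
      simp only [Finset.mem_insert, Finset.mem_singleton, not_or] at hr
      rw [Equiv.swap_apply_of_ne_of_ne hr.1 hr.2, sub_self]
  rw [Finset.sum_pair hpq, Equiv.swap_apply_left, Equiv.swap_apply_right] at h4
  unfold Dg
  linear_combination -h4


lemma Danti (f : Fin n → ((Fin (n + 1) → k) →ₗ[k] (Fin (n + 1) → k))) (p q : Fin n)
    (a : Fin (n+1)) : Dg f p q a = -Dg f q p a := by
  unfold Dg; ring

include m halt hbasis f0 hder in
lemma Dmk (x y : Fin n) (hlt : (x:ℕ) < (y:ℕ)) :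
    (Dg f x y (Fin.castSucc x) = Dg f x y (Fin.succ y)) ∧
    (Dg f x y (Fin.castSucc y) = Dg f x y (Fin.succ y)) ∧
    (Dg f x y (Fin.succ x) = Dg f x y (Fin.succ y)) := by
  have hxy : x ≠ y := fun hc => by simp [hc] at hlt
  have E1 := Dswap m halt hbasis f0 f hder (Fin.last n) x y hxy
  rw [Fin.succAbove_last] at E1
  have E2 := Dswap m halt hbasis f0 f hder (0 : Fin (n+1)) x y hxy
  rw [Fin.zero_succAbove, Fin.zero_succAbove] at E2
  have E3 := Dswap m halt hbasis f0 f hder (⟨(x:ℕ)+1, Nat.succ_lt_succ x.isLt⟩ : Fin (n+1)) x y hxy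
  have e3x : (⟨(x:ℕ)+1, Nat.succ_lt_succ x.isLt⟩ : Fin (n+1)).succAbove x = Fin.castSucc x := by
    apply Fin.ext
    rw [val_succAbove]
    show (if (x:ℕ) < (x:ℕ)+1 then (x:ℕ) else (x:ℕ)+1) = (x:ℕ)
    split_ifs <;> omega
  have e3y : (⟨(x:ℕ)+1, Nat.succ_lt_succ x.isLt⟩ : Fin (n+1)).succAbove y = Fin.succ y := by
    apply Fin.ext
    rw [val_succAbove]
    show (if (y:ℕ) < (x:ℕ)+1 then (y:ℕ) else (y:ℕ)+1) = (y:ℕ)+1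
    split_ifs <;> omega
  rw [e3x, e3y] at E3
  exact ⟨E3, E1.symm.trans E3, E2⟩

include m halt hbasis f0 hder in
lemma DstepPos (x y : Fin n) (hne : x ≠ y) (c : Fin n) (hc : c = x ∨ c = y) :
    Dg f x y (Fin.castSucc c) = Dg f x y (Fin.succ c) := by
  rcases lt_or_gt_of_ne (fun hv => hne (Fin.ext hv) : (x:ℕ) ≠ (y:ℕ)) with hlt | hgt
  · have h := Dmk m halt hbasis f0 f hder x y hlt
    rcases hc with rfl | rfl
    · exact h.1.trans h.2.2.symm
    · exact h.2.1
  · have h := Dmk m halt hbasis f0 f hder y x hgt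
    rw [Danti f x y, Danti f x y, neg_inj]
    rcases hc with rfl | rfl
    · exact h.2.1
    · exact h.1.trans h.2.2.symm

include m halt hbasis f0 hder in
lemma Dstep (p q : Fin n) (hpq : p ≠ q) (a b : Fin (n+1)) (hab : (b:ℕ) = (a:ℕ)+1) :
    Dg f p q a = Dg f p q b := by
  have han : (a:ℕ) < n := by have := b.isLt; omega
  by_cases hap : (a:ℕ) = (p:ℕ)
  · have ha' : a = Fin.castSucc p := Fin.ext hap
    have hb'' : b = Fin.succ p := Fin.ext (by rw [Fin.val_succ]; omega)
    rw [ha', hb'']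
    exact DstepPos m halt hbasis f0 f hder p q hpq p (Or.inl rfl)
  · by_cases haq : (a:ℕ) = (q:ℕ)
    · have ha' : a = Fin.castSucc q := Fin.ext haq
      have hb'' : b = Fin.succ q := Fin.ext (by rw [Fin.val_succ]; omega)
      rw [ha', hb'']
      exact DstepPos m halt hbasis f0 f hder p q hpq q (Or.inr rfl)
    · obtain ⟨c, rfl⟩ : ∃ c : Fin n, a = Fin.castSucc c := ⟨⟨(a:ℕ), han⟩, Fin.ext rfl⟩
      have hcp : p ≠ c := by
        intro hc
        exact hap (by rw [hc, Fin.coe_castSucc])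
      have hcq : c ≠ q := by
        intro hc
        exact haq (by rw [← hc, Fin.coe_castSucc])
      have hsplit : ∀ v : Fin (n+1), Dg f p q v = Dg f p c v + Dg f c q v := by
        intro v; unfold Dg; ring
      have hb'' : b = Fin.succ c := Fin.ext (by rw [Fin.val_succ]; simpa using hab)
      rw [hb'', hsplit, hsplit,
        DstepPos m halt hbasis f0 f hder p c hcp c (Or.inr rfl),
        DstepPos m halt hbasis f0 f hder c q hcq c (Or.inl rfl)]

include m halt hbasis f0 hder in
lemma Dconst (p q : Fin n) (hpq : p ≠ q) (a b : Fin (n+1)) :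
    Dg f p q a = Dg f p q b := by
  have key : ∀ (v : ℕ) (x : Fin (n+1)), (x:ℕ) = v →
      Dg f p q x = Dg f p q (⟨0, Nat.succ_pos n⟩ : Fin (n+1)) := by
    intro v
    induction v with
    | zero =>
      intro x hx
      rw [show x = (⟨0, Nat.succ_pos n⟩ : Fin (n+1)) from Fin.ext hx]
    | succ v ih =>
      intro x hx
      have hvn : v < n := by have := x.isLt; omega
      have h1 : Dg f p q (⟨v, Nat.lt_succ_of_lt hvn⟩ : Fin (n+1)) = Dg f p q x :=
        Dstep m halt hbasis f0 f hder p q hpq ⟨v, Nat.lt_succ_of_lt hvn⟩ x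
          (by show (x:ℕ) = v + 1; omega)
      rw [← h1, ih ⟨v, Nat.lt_succ_of_lt hvn⟩ rfl]
  rw [key (a:ℕ) a rfl, key (b:ℕ) b rfl]


noncomputable def hwit {k : Type*} [Field k] {n : ℕ}
    (f : Fin n → ((Fin (n + 1) → k) →ₗ[k] (Fin (n + 1) → k))) (p0 : Fin n) (c : k) :
    Fin n → k :=
  fun p => f p (Pi.single (0 : Fin (n+1)) 1) 0 - f p0 (Pi.single (0 : Fin (n+1)) 1) 0 + c

end Anp1Aux


/-- Every `(n+1)`-ary derivation `(f₀, f₁, …, fₙ)` of the simple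
`(n+1)`-dimensional `n`-ary Filippov algebra `A_{n+1}` over an algebraically closed field
of characteristic zero decomposes as
`(Σⱼ hⱼ · id, h₁ · id, …, hₙ · id) + (d₀, d, …, d)` with `[d₀]ᵀ + [d] = 0`. -/
theorem Anp1_derivation_structure
    {k : Type*} [Field k] [IsAlgClosed k] [CharZero k] {n : ℕ} (hn : 2 ≤ n)
    (m : MultilinearMap k (fun _ : Fin n => (Fin (n + 1) → k)) (Fin (n + 1) → k))
    (halt : ∀ (x : Fin n → (Fin (n + 1) → k)) (p q : Fin n), p ≠ q → x p = x q → m x = 0)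
    (hbasis : ∀ i : Fin (n + 1),
      m (fun j => Pi.single (i.succAbove j) (1 : k)) =
        ((-1 : k) ^ (n + (i : ℕ))) • (Pi.single i (1 : k) : Fin (n + 1) → k))
    (f0 : (Fin (n + 1) → k) →ₗ[k] (Fin (n + 1) → k))
    (f : Fin n → ((Fin (n + 1) → k) →ₗ[k] (Fin (n + 1) → k)))
    (hder : ∀ x : Fin n → (Fin (n + 1) → k),
      f0 (m x) = ∑ i, m (Function.update x i (f i (x i)))) :
    ∃ (h : Fin n → k) (d0 d : (Fin (n + 1) → k) →ₗ[k] (Fin (n + 1) → k)),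
      f0 = (∑ j, h j) • LinearMap.id + d0 ∧
      (∀ p : Fin n, f p = h p • LinearMap.id + d) ∧
      (∀ i j : Fin (n + 1),
        d0 (Pi.single i (1 : k)) j + d (Pi.single j (1 : k)) i = 0) := by
  classical
  set p0 : Fin n := ⟨0, by omega⟩ with hp0
  set T : k := ∑ u : Fin (n+1), f p0 (Pi.single u 1) u with hT
  set c : k := T / ((n:k)+1) with hc
  have hcn : ((n:k)+1) ≠ 0 := by
    have hcast : ((n:k)+1) = ((n+1 : ℕ) : k) := by push_cast; ring
    rw [hcast]
    exact Nat.cast_ne_zero.mpr (Nat.succ_ne_zero n)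
  have e3 : ((n:k)+1) * c = T := by
    rw [hc]
    field_simp
  refine ⟨Anp1Aux.hwit f p0 c,
    f0 - (∑ p, Anp1Aux.hwit f p0 c p) • LinearMap.id,
    f p0 - c • LinearMap.id, ?_, ?_, ?_⟩
  · abel
  · intro p
    apply Module.Basis.ext (Pi.basisFun k (Fin (n+1)))
    intro j
    simp only [Pi.basisFun_apply]
    simp only [LinearMap.add_apply, LinearMap.smul_apply, LinearMap.sub_apply,
      LinearMap.id_apply]
    funext w
    simp only [Pi.add_apply, Pi.sub_apply, Pi.smul_apply, smul_eq_mul, Anp1Aux.hwit]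
    rcases eq_or_ne w j with rfl | hwj
    · simp only [Pi.single_eq_same]
      rcases eq_or_ne p p0 with rfl | hp
      · ring
      · have hD := Anp1Aux.Dconst m halt hbasis f0 f hder p p0 hp w (0 : Fin (n+1))
        unfold Anp1Aux.Dg at hD
        linear_combination hD
    · simp only [Pi.single_eq_of_ne hwj]
      have h1 := Anp1Aux.Roff m halt hbasis f0 f hder w j (Ne.symm hwj) p
      have h2 := Anp1Aux.Roff m halt hbasis f0 f hder w j (Ne.symm hwj) p0
      linear_combination h1 - h2
  · intro i j
    simp only [LinearMap.sub_apply, LinearMap.smul_apply, LinearMap.id_apply,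
      Pi.sub_apply, Pi.smul_apply, smul_eq_mul, Pi.add_apply]
    rcases eq_or_ne i j with rfl | hij
    · simp only [Pi.single_eq_same]
      have hR1 := (Anp1Aux.S_id m halt hbasis f0 f hder i).1
      have hdiag : ∀ (r : Fin n) (a : Fin (n+1)), f r (Pi.single a 1) a
          = (f r (Pi.single (0 : Fin (n+1)) 1) 0 - f p0 (Pi.single (0 : Fin (n+1)) 1) 0)
            + f p0 (Pi.single a 1) a := by
        intro r a
        rcases eq_or_ne r p0 with rfl | hr
        · ring
        · have hD := Anp1Aux.Dconst m halt hbasis f0 f hder r p0 hr a (0 : Fin (n+1))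
          unfold Anp1Aux.Dg at hD
          linear_combination hD
      have s1 : ∑ r : Fin n, f r (Pi.single (i.succAbove r) 1) (i.succAbove r)
          = (∑ r : Fin n, (f r (Pi.single (0 : Fin (n+1)) 1) 0
              - f p0 (Pi.single (0 : Fin (n+1)) 1) 0))
            + ∑ r : Fin n, f p0 (Pi.single (i.succAbove r) 1) (i.succAbove r) := by
        rw [← Finset.sum_add_distrib]
        exact Finset.sum_congr rfl (fun r _ => hdiag r _)
      have hsum := Fin.sum_univ_succAbove (fun u => f p0 (Pi.single u 1) u) i
      have hS : ∑ p, Anp1Aux.hwit f p0 c p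
          = (∑ r : Fin n, (f r (Pi.single (0 : Fin (n+1)) 1) 0
              - f p0 (Pi.single (0 : Fin (n+1)) 1) 0)) + (n:k) * c := by
        simp only [Anp1Aux.hwit]
        rw [Finset.sum_add_distrib, Finset.sum_const, Finset.card_univ, Fintype.card_fin,
          nsmul_eq_mul]
      linear_combination hR1 + s1 - hS - hsum - hT - e3
    · simp only [Pi.single_eq_of_ne (Ne.symm hij), Pi.single_eq_of_ne hij]
      have h1 := Anp1Aux.Roff m halt hbasis f0 f hder i j (Ne.symm hij) p0
      linear_combination h1
end

section
/- For the simple n-ary Filippov algebra A = A_{n+1} over an algebraically closed field of characteristic zero, every linear endomorphism f_0 of A is a generalized derivation; i.e., GDer(A) = End(A). -/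
lemma exists_perm_aux {n : ℕ} {v : Fin n → Fin (n+1)} (hv : Function.Injective v)
    {i : Fin (n+1)} (hvi : ∀ j, v j ≠ i) :
    ∃ σ : Equiv.Perm (Fin n), v = i.succAbove ∘ σ := by
  have h : ∀ j, ∃ t, i.succAbove t = v j := fun j => Fin.exists_succAbove_eq (hvi j)
  choose u hu using h
  have hui : Function.Injective u := fun a b hab => hv (by rw [← hu a, ← hu b, hab])
  refine ⟨Equiv.ofBijective u (Finite.injective_iff_bijective.mp hui), ?_⟩
  funext j
  exact (hu j).symm

lemma exists_missing {n : ℕ} {v : Fin n → Fin (n+1)} (hv : Function.Injective v) :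
    ∃ i : Fin (n+1), ∀ j, v j ≠ i := by
  by_contra h
  push_neg at h
  have hs : Function.Surjective v := fun i => h i
  have := Fintype.card_le_of_surjective v hs
  simp at this

/-- For the simple `n`-ary Filippov algebra `A = A_{n+1}` over an
algebraically closed field of characteristic zero, every linear endomorphism is a
generalized derivation: `GDer(A) = End(A)`. -/
theorem Anp1_gder_eq_end
    {k : Type*} [Field k] [IsAlgClosed k] [CharZero k] {n : ℕ} (hn : 2 ≤ n)
    (m : MultilinearMap k (fun _ : Fin n => (Fin (n + 1) → k)) (Fin (n + 1) → k))
    (halt : ∀ (x : Fin n → (Fin (n + 1) → k)) (p q : Fin n), p ≠ q → x p = x q → m x = 0)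
    (hbasis : ∀ i : Fin (n + 1),
      m (fun j => Pi.single (i.succAbove j) (1 : k)) =
        ((-1 : k) ^ (n + (i : ℕ))) • (Pi.single i (1 : k) : Fin (n + 1) → k))
    (f0 : (Fin (n + 1) → k) →ₗ[k] (Fin (n + 1) → k)) :
    ∃ f : Fin n → ((Fin (n + 1) → k) →ₗ[k] (Fin (n + 1) → k)),
      ∀ x : Fin n → (Fin (n + 1) → k),
        f0 (m x) = ∑ i, m (Function.update x i (f i (x i))) := by
  classical
  set e : Fin (n+1) → (Fin (n+1) → k) := fun b => Pi.single b 1 with he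
  set ε : Fin (n+1) → k := fun i => (-1 : k) ^ (n + (i:ℕ)) with hεdef
  have hε : ∀ i, ε i ≠ 0 := fun i => pow_ne_zero _ (by norm_num)
  -- the alternating map associated to m
  let M' : (Fin (n+1) → k) [⋀^Fin n]→ₗ[k] (Fin (n+1) → k) :=
    { m with map_eq_zero_of_eq' := fun x p q h hne => halt x p q hne h }
  have hM' : ∀ x, M' x = m x := fun _ => rfl
  -- nonzero component c i j
  set c : Fin (n+1) → Fin n → k :=
    fun i j => m (fun t => e (Function.update i.succAbove j i t)) (i.succAbove j) with hcdef
  have hval : ∀ (i : Fin (n+1)) (v : Fin n → Fin (n+1)), Function.Injective v →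
      (∀ j, v j ≠ i) → ∃ s : k, s ≠ 0 ∧ m (fun j => e (v j)) = s • e i := by
    intro i v hv hvi
    obtain ⟨σ, hσ⟩ := exists_perm_aux hv hvi
    have hcomp : (fun j => e (v j)) = (fun j => e (i.succAbove j)) ∘ σ := by
      funext j; simp [hσ]
    have h1 : M' ((fun j => e (i.succAbove j)) ∘ σ)
        = Equiv.Perm.sign σ • M' (fun j => e (i.succAbove j)) :=
      M'.map_perm _ σ
    refine ⟨((Equiv.Perm.sign σ : ℤ) : k) * ε i, ?_, ?_⟩
    · rcases Int.units_eq_one_or (Equiv.Perm.sign σ) with h | h <;>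
        simp [h, hε i]
    · rw [hcomp, ← hM', h1, hM', hbasis i]
      rw [Units.smul_def, ← Int.cast_smul_eq_zsmul k, smul_smul]
  have hc : ∀ (i : Fin (n+1)) (j : Fin n),
      c i j ≠ 0 ∧ m (fun t => e (Function.update i.succAbove j i t))
        = c i j • e (i.succAbove j) := by
    intro i j
    have hinj : Function.Injective (Function.update i.succAbove j i) := by
      intro a b hab
      by_cases ha : a = j
      · by_cases hb : b = j
        · rw [ha, hb]
        · rw [ha, Function.update_self, Function.update_of_ne hb] at hab
          exact absurd hab.symm (Fin.succAbove_ne i b)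
      · by_cases hb : b = j
        · rw [hb, Function.update_self, Function.update_of_ne ha] at hab
          exact absurd hab (Fin.succAbove_ne i a)
        · rw [Function.update_of_ne ha, Function.update_of_ne hb] at hab
          exact Fin.succAbove_right_injective hab
    have havoid : ∀ t, Function.update i.succAbove j i t ≠ i.succAbove j := by
      intro t
      by_cases ht : t = j
      · rw [ht, Function.update_self]; exact (Fin.succAbove_ne i j).symm
      · rw [Function.update_of_ne ht]
        exact fun h => ht (Fin.succAbove_right_injective h)
    obtain ⟨s, hs0, hs⟩ := hval (i.succAbove j) _ hinj havoid
    have hcs : c i j = s := by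
      rw [hcdef]; simp only [hs]
      simp [he, Pi.single_apply]
    rw [hcs]
    exact ⟨hs0, hs⟩
  -- the matrix G and the map g
  set T : k := ∑ a, f0 (e a) a with hT
  have hnk : (n:k) ≠ 0 := Nat.cast_ne_zero.mpr (by omega)
  set jof : Fin (n+1) → Fin (n+1) → Fin n := fun a b =>
    if h : b ≠ a then Classical.choose (Fin.exists_succAbove_eq h) else ⟨0, by omega⟩
    with hjofdef
  have hjof : ∀ (a b : Fin (n+1)) (h : b ≠ a), a.succAbove (jof a b) = b := by
    intro a b h
    simp only [hjofdef, dif_pos h]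
    exact Classical.choose_spec (Fin.exists_succAbove_eq h)
  have hjof2 : ∀ (a : Fin (n+1)) (j : Fin n), jof a (a.succAbove j) = j := by
    intro a j
    exact Fin.succAbove_right_injective (hjof a _ (Fin.succAbove_ne a j))
  set G : Matrix (Fin (n+1)) (Fin (n+1)) k := fun a b =>
    if a = b then T / n - f0 (e b) b else ε a * f0 (e a) b / c a (jof a b) with hGdef
  have hGdiag : ∀ b, G b b = T / n - f0 (e b) b := fun b => by simp [hGdef]
  have hGoff : ∀ a b, a ≠ b → G a b = ε a * f0 (e a) b / c a (jof a b) :=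
    fun a b h => by simp [hGdef, h]
  set g : (Fin (n+1) → k) →ₗ[k] (Fin (n+1) → k) := Matrix.toLin' G with hgdef
  have hg : ∀ b, g (e b) = ∑ l, G l b • e l := by
    intro b
    have h1 : g (e b) = fun l => G l b := by
      rw [hgdef, he]
      simp [Matrix.toLin'_apply, Matrix.mulVec_single]
      rfl
    rw [h1]
    funext t
    rw [Finset.sum_apply]
    simp [he, Pi.single_apply, Finset.sum_ite_eq]
  -- the candidate sum-of-slots multilinear map
  set Dmul : MultilinearMap k (fun _ : Fin n => (Fin (n+1) → k)) (Fin (n+1) → k) :=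
    ∑ i : Fin n, m.compLinearMap (Function.update (fun _ => LinearMap.id) i g) with hDdef
  have hD : ∀ x, Dmul x = ∑ i, m (Function.update x i (g (x i))) := by
    intro x
    rw [hDdef, MultilinearMap.sum_apply]
    refine Finset.sum_congr rfl fun i _ => ?_
    rw [MultilinearMap.compLinearMap_apply]
    congr 1
    funext j
    by_cases h : j = i
    · subst h; simp
    · simp [Function.update_of_ne h]
  have hDzero : ∀ (x : Fin n → (Fin (n+1) → k)) (p q : Fin n), p ≠ q → x p = x q →
      Dmul x = 0 := by
    intro x p q hpq hxpq
    rw [hD]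
    have houter : ∀ i ∈ Finset.univ, i ∉ ({p, q} : Finset (Fin n)) →
        m (Function.update x i (g (x i))) = 0 := by
      intro i _ hi
      simp only [Finset.mem_insert, Finset.mem_singleton, not_or] at hi
      refine halt _ p q hpq ?_
      rw [Function.update_of_ne (Ne.symm hi.1), Function.update_of_ne (Ne.symm hi.2)]
      exact hxpq
    have hswap : m (Function.update x q (g (x q))) = - m (Function.update x p (g (x p))) := by
      have hq : Function.update x q (g (x q)) =
          (Function.update x p (g (x p))) ∘ Equiv.swap p q := by
        funext t
        by_cases hjp : t = p
        · rw [hjp]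
          show Function.update x q (g (x q)) p
            = Function.update x p (g (x p)) (Equiv.swap p q p)
          rw [Equiv.swap_apply_left, Function.update_of_ne hpq,
            Function.update_of_ne (Ne.symm hpq), hxpq]
        · by_cases hjq : t = q
          · rw [hjq]
            show Function.update x q (g (x q)) q
              = Function.update x p (g (x p)) (Equiv.swap p q q)
            rw [Equiv.swap_apply_right, Function.update_self, Function.update_self, hxpq]
          · show Function.update x q (g (x q)) t
              = Function.update x p (g (x p)) (Equiv.swap p q t)
            rw [Equiv.swap_apply_of_ne_of_ne hjp hjq, Function.update_of_ne hjq,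
              Function.update_of_ne hjp]
      rw [hq, ← hM', M'.map_swap _ hpq, hM']
    rw [← Finset.sum_subset (Finset.subset_univ ({p, q} : Finset (Fin n))) houter,
      Finset.sum_pair hpq, hswap, add_neg_cancel]
  let Dalt : (Fin (n+1) → k) [⋀^Fin n]→ₗ[k] (Fin (n+1) → k) :=
    { Dmul with map_eq_zero_of_eq' := fun v p q h hne => hDzero v p q hne h }
  have hDalt : ∀ x, Dalt x = Dmul x := fun _ => rfl
  -- KEY computation on the distinguished basis tuples
  have hKEY : ∀ i : Fin (n+1),
      f0 (m (fun j => e (i.succAbove j))) = Dmul (fun j => e (i.succAbove j)) := by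
    intro i
    have hLHS : f0 (m (fun j => e (i.succAbove j))) = ε i • f0 (e i) := by
      have h1 : m (fun j => e (i.succAbove j)) = ε i • e i := hbasis i
      rw [h1, map_smul]
    rw [hLHS, hD]
    have hbi : ∀ j : Fin n, i.succAbove j ≠ i := fun j => Fin.succAbove_ne i j
    have hterm : ∀ j : Fin n,
        m (Function.update (fun t => e (i.succAbove t)) j (g ((fun t => e (i.succAbove t)) j)))
          = (G (i.succAbove j) (i.succAbove j) * ε i) • e i
            + (G i (i.succAbove j) * c i j) • e (i.succAbove j) := by
      intro j
      set tup : Fin n → (Fin (n+1) → k) := fun t => e (i.succAbove t) with htup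
      set b : Fin (n+1) := i.succAbove j with hb
      have hlin : ∀ y, m (Function.update tup j y) = (m.toLinearMap tup j) y := fun _ => rfl
      have hgb : tup j = e b := rfl
      rw [hgb, hg b, hlin, map_sum]
      have hsmul : ∀ l : Fin (n+1), (m.toLinearMap tup j) (G l b • e l)
          = G l b • m (Function.update tup j (e l)) := by
        intro l
        rw [map_smul]
        rfl
      simp only [hsmul]
      have hvz : ∀ l, l ≠ i → l ≠ b → m (Function.update tup j (e l)) = 0 := by
        intro l hli hlb
        obtain ⟨j', hj'⟩ := Fin.exists_succAbove_eq hli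
        have hj'j : j' ≠ j := fun h => hlb (by rw [← hj', h, hb])
        refine halt _ j' j hj'j ?_
        rw [Function.update_of_ne hj'j, Function.update_self]
        show e (i.succAbove j') = e l
        rw [hj']
      have hvb : m (Function.update tup j (e b)) = ε i • e i := by
        have h2 : Function.update tup j (e b) = tup := by
          funext t
          by_cases ht : t = j
          · rw [ht, Function.update_self]
          · rw [Function.update_of_ne ht]
        rw [h2, htup]
        exact hbasis i
      have hvi : m (Function.update tup j (e i)) = c i j • e b := by
        have h2 : Function.update tup j (e i) =
            fun t => e (Function.update i.succAbove j i t) := by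
          funext t
          by_cases ht : t = j
          · rw [ht, Function.update_self, Function.update_self]
          · rw [Function.update_of_ne ht, htup, Function.update_of_ne ht]
        rw [h2]
        exact (hc i j).2
      have hbne : b ≠ i := hbi j
      have houter2 : ∀ l ∈ Finset.univ, l ∉ ({b, i} : Finset (Fin (n+1))) →
          G l b • m (Function.update tup j (e l)) = 0 := by
        intro l _ hl
        simp only [Finset.mem_insert, Finset.mem_singleton, not_or] at hl
        rw [hvz l hl.2 hl.1, smul_zero]
      rw [← Finset.sum_subset (Finset.subset_univ ({b, i} : Finset (Fin (n+1)))) houter2,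
        Finset.sum_pair hbne, hvb, hvi, smul_smul, smul_smul]
    simp only [hterm]
    rw [Finset.sum_add_distrib, ← Finset.sum_smul]
    have hA : ∑ j : Fin n, G (i.succAbove j) (i.succAbove j) = f0 (e i) i := by
      have hsum := Fin.sum_univ_succAbove (fun a => f0 (e a) a) i
      have h2 : ∑ j : Fin n, f0 (e (i.succAbove j)) (i.succAbove j) = T - f0 (e i) i := by
        rw [hT, hsum]; ring
      simp only [hGdiag]
      have hmul : (n:k) * (T/n) = T := by field_simp
      rw [Finset.sum_sub_distrib, h2, Finset.sum_const, Finset.card_univ, Fintype.card_fin,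
        nsmul_eq_mul, hmul]
      ring
    have hdecomp : f0 (e i) = ∑ a, f0 (e i) a • e a := by
      conv_lhs => rw [pi_eq_sum_univ (f0 (e i))]
      refine Finset.sum_congr rfl fun a _ => ?_
      congr 1
      funext t
      simp [he, Pi.single_apply, eq_comm]
    rw [hdecomp, Fin.sum_univ_succAbove (fun a => f0 (e i) a • e a) i, smul_add,
      Finset.smul_sum]
    congr 1
    · rw [← Finset.sum_mul, hA, smul_smul]
      ring_nf
    · refine Finset.sum_congr rfl fun j _ => ?_
      have hine : i ≠ i.succAbove j := (hbi j).symm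
      rw [hGoff i _ hine, hjof2 i j, div_mul_cancel₀ _ (hc i j).1, smul_smul]
  -- conclude by multilinear extensionality
  refine ⟨fun _ => g, ?_⟩
  have main : f0.compMultilinearMap m = Dmul := by
    apply Module.Basis.ext_multilinear (fun _ => Pi.basisFun k (Fin (n+1)))
    intro v
    have hbe : (fun j => (Pi.basisFun k (Fin (n+1))) (v j)) = fun j => e (v j) := by
      funext j
      rw [he, Pi.basisFun_apply]
    rw [hbe]
    by_cases hv : Function.Injective v
    · obtain ⟨i, hi⟩ := exists_missing hv
      obtain ⟨σ, hσ⟩ := exists_perm_aux hv hi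
      have hcomp : (fun j => e (v j)) = (fun j => e (i.succAbove j)) ∘ σ := by
        funext j
        simp only [Function.comp_apply, hσ]
      have h1 : (f0.compAlternatingMap M') ((fun j => e (i.succAbove j)) ∘ σ)
          = Equiv.Perm.sign σ • (f0.compAlternatingMap M') (fun j => e (i.succAbove j)) :=
        (f0.compAlternatingMap M').map_perm _ σ
      have h2 : Dalt ((fun j => e (i.succAbove j)) ∘ σ)
          = Equiv.Perm.sign σ • Dalt (fun j => e (i.succAbove j)) :=
        Dalt.map_perm _ σ
      have hL : ∀ y, f0.compMultilinearMap m y = (f0.compAlternatingMap M') y := fun _ => rfl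
      have hR : ∀ y, Dmul y = Dalt y := fun _ => rfl
      rw [hcomp, hL, h1, hR, h2]
      congr 1
      rw [← hL, ← hR]
      exact hKEY i
    · rw [Function.not_injective_iff] at hv
      obtain ⟨p, q, hpq, hne⟩ := hv
      have hepq : e (v p) = e (v q) := by rw [hpq]
      have hLz : m (fun j => e (v j)) = 0 := halt _ p q hne hepq
      have hRz : Dmul (fun j => e (v j)) = 0 := hDzero _ p q hne hepq
      rw [LinearMap.compMultilinearMap_apply, hLz, map_zero, hRz]
  intro x
  calc f0 (m x) = f0.compMultilinearMap m x := rfl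
    _ = Dmul x := by rw [main]
    _ = _ := hD x
end

section
/- For the simple n-ary Filippov algebra A = A_{n+1} over an algebraically closed field of characteristic zero, every linear endomorphism f_0 of A is a quasiderivation; i.e., QDer(A) = End(A). Explicitly, for any f_0 ∈ End(A) there exists a single linear map f such that f_0[x_1,...,x_n] = Σ_{i=1}^n [x_1,..., f(x_i),...,x_n] for all x_i. -/
open Function

namespace Anp1Qder

variable {k : Type*} [Field k] {n : ℕ}

lemma succAbove_congr_of_ne {i' b : Fin n} (hb : b ≠ i') :
    (Fin.castSucc i').succAbove b = (Fin.succ i').succAbove b := by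
  rcases lt_or_gt_of_ne hb with h | h
  · rw [Fin.succAbove_castSucc_of_lt _ _ h, Fin.succAbove_succ_of_le _ _ h.le]
  · rw [Fin.succAbove_castSucc_of_le _ _ h.le, Fin.succAbove_succ_of_lt _ _ h]

variable (G : (Fin (n + 1) → k) [⋀^Fin n]→ₗ[k] (Fin (n + 1) → k))

/-- swapping step -/
lemma stepG (i' j : Fin n) (hj : j ≠ i') :
    G (update (fun b => (Pi.single ((Fin.succ i').succAbove b) 1 : Fin (n + 1) → k)) j
        (Pi.single (Fin.succ i') 1))
      = - G (update (fun b => (Pi.single ((Fin.castSucc i').succAbove b) 1 : Fin (n + 1) → k)) j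
        (Pi.single (Fin.castSucc i') 1)) := by
  have hT : (update (fun b => (Pi.single ((Fin.succ i').succAbove b) 1 : Fin (n + 1) → k)) j
        (Pi.single (Fin.succ i') 1))
      = (update (fun b => (Pi.single ((Fin.castSucc i').succAbove b) 1 : Fin (n + 1) → k)) j
        (Pi.single (Fin.castSucc i') 1)) ∘ Equiv.swap j i' := by
    funext b
    rcases eq_or_ne b j with rfl | hbj
    · rw [update_self, comp_apply, Equiv.swap_apply_left, update_of_ne (Ne.symm hj),
        Fin.succAbove_castSucc_self]
    · rcases eq_or_ne b i' with rfl | hbi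
      · rw [update_of_ne hbj, comp_apply, Equiv.swap_apply_right, update_self,
          Fin.succAbove_succ_self]
      · rw [update_of_ne hbj, comp_apply, Equiv.swap_apply_of_ne_of_ne hbj hbi,
          update_of_ne hbj, succAbove_congr_of_ne hbi]
  rw [hT, G.map_swap _ hj]

variable (hbasis : ∀ i : Fin (n + 1),
      G (fun j => Pi.single (i.succAbove j) (1 : k)) =
        ((-1 : k) ^ (n + (i : ℕ))) • (Pi.single i (1 : k) : Fin (n + 1) → k))

include hbasis

lemma base1 (j : Fin n) :
    G (update (fun b => (Pi.single ((Fin.castSucc j).succAbove b) 1 : Fin (n + 1) → k)) j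
        (Pi.single (Fin.castSucc j) 1))
      = -(((-1 : k) ^ (n + ((Fin.castSucc j : Fin (n + 1)) : ℕ))) •
          (Pi.single ((Fin.castSucc j).succAbove j) (1 : k) : Fin (n + 1) → k)) := by
  have hT : (update (fun b => (Pi.single ((Fin.castSucc j).succAbove b) 1 : Fin (n + 1) → k)) j
        (Pi.single (Fin.castSucc j) 1))
      = fun b => (Pi.single ((Fin.succ j).succAbove b) 1 : Fin (n + 1) → k) := by
    funext b
    rcases eq_or_ne b j with rfl | hb
    · rw [update_self, Fin.succAbove_succ_self]
    · rw [update_of_ne hb, succAbove_congr_of_ne hb]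
  rw [hT, hbasis (Fin.succ j), Fin.succAbove_castSucc_self, Fin.val_succ, Fin.coe_castSucc,
    ← Nat.add_assoc, pow_succ, mul_neg_one, neg_smul]

lemma base2 (j : Fin n) :
    G (update (fun b => (Pi.single ((Fin.succ j).succAbove b) 1 : Fin (n + 1) → k)) j
        (Pi.single (Fin.succ j) 1))
      = -(((-1 : k) ^ (n + ((Fin.succ j : Fin (n + 1)) : ℕ))) •
          (Pi.single ((Fin.succ j).succAbove j) (1 : k) : Fin (n + 1) → k)) := by
  have hT : (update (fun b => (Pi.single ((Fin.succ j).succAbove b) 1 : Fin (n + 1) → k)) j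
        (Pi.single (Fin.succ j) 1))
      = fun b => (Pi.single ((Fin.castSucc j).succAbove b) 1 : Fin (n + 1) → k) := by
    funext b
    rcases eq_or_ne b j with rfl | hb
    · rw [update_self, Fin.succAbove_castSucc_self]
    · rw [update_of_ne hb, succAbove_congr_of_ne hb]
  rw [hT, hbasis (Fin.castSucc j), Fin.succAbove_succ_self, Fin.val_succ, Fin.coe_castSucc,
    ← Nat.add_assoc, pow_succ, mul_neg_one, neg_smul, neg_neg]

lemma lemA (i : Fin (n + 1)) (j : Fin n) :
    G (update (fun b => (Pi.single (i.succAbove b) 1 : Fin (n + 1) → k)) j (Pi.single i 1))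
      = -(((-1 : k) ^ (n + (i : ℕ))) •
          (Pi.single (i.succAbove j) (1 : k) : Fin (n + 1) → k)) := by
  have key : ∀ d : ℕ, ∀ i : Fin (n + 1), ∀ j : Fin n,
      ((i : ℕ) + d = (j : ℕ) ∨ (i : ℕ) = (j : ℕ) + 1 + d) →
      G (update (fun b => (Pi.single (i.succAbove b) 1 : Fin (n + 1) → k)) j (Pi.single i 1))
        = -(((-1 : k) ^ (n + (i : ℕ))) •
            (Pi.single (i.succAbove j) (1 : k) : Fin (n + 1) → k)) := by
    intro d
    induction d with
    | zero =>
      intro i j h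
      rcases h with h | h
      · have : i = Fin.castSucc j := Fin.ext (by simp; omega)
        subst this
        exact base1 G hbasis j
      · have : i = Fin.succ j := Fin.ext (by simp; omega)
        subst this
        exact base2 G hbasis j
    | succ d ih =>
      intro i j h
      rcases h with h | h
      · have hi : (i : ℕ) < n := by have := j.isLt; omega
        have hci : i = Fin.castSucc (⟨(i : ℕ), hi⟩ : Fin n) := Fin.ext rfl
        set i' : Fin n := ⟨(i : ℕ), hi⟩ with hi'
        have hji' : j ≠ i' := by
          intro e
          rw [e] at h
          simp [hi'] at h
        have hP := ih (Fin.succ i') j (Or.inl (by simp [hi']; omega))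
        have hstep := stepG G i' j hji'
        have h2 : G (update (fun b =>
              (Pi.single ((Fin.castSucc i').succAbove b) 1 : Fin (n + 1) → k)) j
              (Pi.single (Fin.castSucc i') 1))
            = - G (update (fun b =>
              (Pi.single ((Fin.succ i').succAbove b) 1 : Fin (n + 1) → k)) j
              (Pi.single (Fin.succ i') 1)) := by
          rw [hstep, neg_neg]
        rw [hci]
        rw [h2, hP, neg_neg, ← succAbove_congr_of_ne hji', Fin.val_succ, Fin.coe_castSucc,
          ← Nat.add_assoc, pow_succ, mul_neg_one, neg_smul]
      · have h0 : i ≠ 0 := by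
          intro e; rw [e] at h; simp at h
        have hi1 : (i : ℕ) - 1 < n := by have := i.isLt; omega
        have hsi : i = Fin.succ (⟨(i : ℕ) - 1, hi1⟩ : Fin n) := Fin.ext (by
          simp [Fin.val_succ]
          omega)
        set i' : Fin n := ⟨(i : ℕ) - 1, hi1⟩ with hi'
        have hji' : j ≠ i' := by
          intro e; rw [e] at h; simp [hi'] at h; omega
        have hP := ih (Fin.castSucc i') j (Or.inr (by simp [hi']; omega))
        have hstep := stepG G i' j hji'
        rw [hsi, hstep, hP, neg_neg, ← succAbove_congr_of_ne hji', Fin.val_succ,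
          Fin.coe_castSucc, ← Nat.add_assoc, pow_succ, mul_neg_one, neg_smul, neg_neg]
  rcases le_or_gt (i : ℕ) (j : ℕ) with h | h
  · exact key ((j : ℕ) - (i : ℕ)) i j (Or.inl (by omega))
  · exact key ((i : ℕ) - (j : ℕ) - 1) i j (Or.inr (by omega))

end Anp1Qder

/-- For the simple `n`-ary Filippov algebra `A = A_{n+1}` over an
algebraically closed field of characteristic zero, every linear endomorphism `f₀` is a
quasiderivation: there is a single linear map `f` with
`f₀[x₁,…,xₙ] = Σᵢ [x₁,…,f(xᵢ),…,xₙ]`. Hence `QDer(A) = End(A)`. -/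
theorem Anp1_qder_eq_end
    {k : Type*} [Field k] [IsAlgClosed k] [CharZero k] {n : ℕ} (hn : 2 ≤ n)
    (m : MultilinearMap k (fun _ : Fin n => (Fin (n + 1) → k)) (Fin (n + 1) → k))
    (halt : ∀ (x : Fin n → (Fin (n + 1) → k)) (p q : Fin n), p ≠ q → x p = x q → m x = 0)
    (hbasis : ∀ i : Fin (n + 1),
      m (fun j => Pi.single (i.succAbove j) (1 : k)) =
        ((-1 : k) ^ (n + (i : ℕ))) • (Pi.single i (1 : k) : Fin (n + 1) → k))
    (f0 : (Fin (n + 1) → k) →ₗ[k] (Fin (n + 1) → k)) :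
    ∃ f : (Fin (n + 1) → k) →ₗ[k] (Fin (n + 1) → k),
      ∀ x : Fin n → (Fin (n + 1) → k),
        f0 (m x) = ∑ i, m (Function.update x i (f (x i))) := by
  classical
  set E : Fin (n + 1) → (Fin (n + 1) → k) := fun t => Pi.single t 1 with hE
  have hnk : (n : k) ≠ 0 := Nat.cast_ne_zero.mpr (by omega)
  set S : k := ∑ t, f0 (E t) t with hS
  set c : k := S / n with hc
  set τ : (Fin (n + 1) → k) →ₗ[k] (Fin (n + 1) → k) :=
    Matrix.toLin' (Matrix.of fun a b => f0 (E a) b) with hτ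
  set f : (Fin (n + 1) → k) →ₗ[k] (Fin (n + 1) → k) :=
    c • (LinearMap.id : (Fin (n + 1) → k) →ₗ[k] (Fin (n + 1) → k)) - τ with hfdef
  have hf : ∀ s t : Fin (n + 1), f (E s) t = (if t = s then c else 0) - f0 (E t) s := by
    intro s t
    have hτv : τ (E s) t = f0 (E t) s := by
      simp [hτ, Matrix.toLin'_apply, hE, Matrix.mulVec_single]
    simp only [hfdef, LinearMap.sub_apply, LinearMap.smul_apply, LinearMap.id_apply,
      Pi.sub_apply, Pi.smul_apply, smul_eq_mul, hτv, hE]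
    rw [Pi.single_apply]
    by_cases h : t = s <;> simp [h] <;> simpa [hE, h] using hτv
  set G : (Fin (n + 1) → k) [⋀^Fin n]→ₗ[k] (Fin (n + 1) → k) :=
    ⟨m, fun v i j he hne => halt v i j hne he⟩ with hG
  have hGm : ∀ x, G x = m x := fun _ => rfl
  refine ⟨f, ?_⟩
  -- bundle the right-hand side as a multilinear map
  set Rm : MultilinearMap k (fun _ : Fin n => (Fin (n + 1) → k)) (Fin (n + 1) → k) :=
    ∑ j : Fin n, m.compLinearMap (fun b => if b = j then f else LinearMap.id) with hRmdef
  have hRm : ∀ x, Rm x = ∑ j, m (Function.update x j (f (x j))) := by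
    intro x
    rw [hRmdef, MultilinearMap.sum_apply]
    refine Finset.sum_congr rfl fun j _ => ?_
    rw [MultilinearMap.compLinearMap_apply]
    congr 1
    funext b
    rcases eq_or_ne b j with rfl | hb
    · simp
    · simp [hb, Function.update_of_ne hb]
  have hRalt : ∀ (v : Fin n → (Fin (n + 1) → k)) (p q : Fin n), v p = v q → p ≠ q →
      Rm v = 0 := by
    intro v p q hpq hne
    rw [hRm]
    have hswap : Function.update v q (f (v q))
        = (Function.update v p (f (v p))) ∘ Equiv.swap p q := by
      funext b
      rcases eq_or_ne b p with rfl | hbp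
      · rw [comp_apply, Equiv.swap_apply_left, Function.update_of_ne hne.symm,
          Function.update_of_ne hne, hpq]
      · rcases eq_or_ne b q with rfl | hbq
        · rw [comp_apply, Equiv.swap_apply_right, Function.update_self,
            Function.update_self, hpq]
        · rw [comp_apply, Equiv.swap_apply_of_ne_of_ne hbp hbq,
            Function.update_of_ne hbq, Function.update_of_ne hbp]
    have hq : m (Function.update v q (f (v q))) = - m (Function.update v p (f (v p))) := by
      rw [hswap]
      exact G.map_swap _ hne
    rw [← Finset.add_sum_erase _ _ (Finset.mem_univ p),
      ← Finset.add_sum_erase _ _ (Finset.mem_erase.mpr ⟨hne.symm, Finset.mem_univ q⟩)]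
    have h0 : ∑ j ∈ (Finset.univ.erase p).erase q,
        m (Function.update v j (f (v j))) = 0 := by
      refine Finset.sum_eq_zero fun j hj => ?_
      have hjq : j ≠ q := (Finset.mem_erase.mp hj).1
      have hjp : j ≠ p := (Finset.mem_erase.mp (Finset.mem_erase.mp hj).2).1
      refine halt _ p q hne ?_
      rw [Function.update_of_ne (Ne.symm hjp), Function.update_of_ne (Ne.symm hjq), hpq]
    rw [h0, hq]
    abel
  set R : (Fin (n + 1) → k) [⋀^Fin n]→ₗ[k] (Fin (n + 1) → k) := ⟨Rm, hRalt⟩ with hR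
  have hRmR : ∀ x, R x = Rm x := fun _ => rfl
  set L : (Fin (n + 1) → k) [⋀^Fin n]→ₗ[k] (Fin (n + 1) → k) :=
    f0.compAlternatingMap G with hL
  -- the core computation on increasing basis tuples
  have hcore : ∀ i : Fin (n + 1),
      L (fun b => E (i.succAbove b)) = R (fun b => E (i.succAbove b)) := by
    intro i
    have hval : ∀ (j : Fin n) (t : Fin (n + 1)),
        m (Function.update (fun b => E (i.succAbove b)) j (E t))
          = if t = i.succAbove j then ((-1 : k) ^ (n + (i : ℕ))) • E i
            else if t = i then -(((-1 : k) ^ (n + (i : ℕ))) • E (i.succAbove j)) else 0 := by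
      intro j t
      rcases eq_or_ne t (i.succAbove j) with rfl | h1
      · rw [if_pos rfl]
        have hupd : Function.update (fun b => E (i.succAbove b)) j (E (i.succAbove j))
            = fun b => E (i.succAbove b) := Function.update_eq_self j _
        rw [hupd]
        exact hbasis i
      · rw [if_neg h1]
        rcases eq_or_ne t i with rfl | h2
        · rw [if_pos rfl]
          rw [← hGm]
          exact Anp1Qder.lemA G hbasis t j
        · rw [if_neg h2]
          obtain ⟨j', hj'⟩ := Fin.exists_succAbove_eq h2
          have hj'j : j' ≠ j := by rintro rfl; exact h1 hj'.symm
          refine halt _ j j' (Ne.symm hj'j) ?_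
          rw [Function.update_self, Function.update_of_ne hj'j, ← hj']
    have hexp : ∀ j : Fin n,
        m (Function.update (fun b => E (i.succAbove b)) j (f (E (i.succAbove j))))
          = (f (E (i.succAbove j)) (i.succAbove j)) • (((-1 : k) ^ (n + (i : ℕ))) • E i)
            + (f (E (i.succAbove j)) i) •
              (-(((-1 : k) ^ (n + (i : ℕ))) • E (i.succAbove j))) := by
      intro j
      have hu : f (E (i.succAbove j)) = ∑ t, (f (E (i.succAbove j)) t) • E t := by
        funext u
        rw [Finset.sum_apply]
        simp [hE, Pi.single_apply]
      conv_lhs => rw [hu]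
      rw [m.map_update_sum]
      have hterm : ∀ t, m (Function.update (fun b => E (i.succAbove b)) j
          ((f (E (i.succAbove j)) t) • E t))
          = (f (E (i.succAbove j)) t) •
            (if t = i.succAbove j then ((-1 : k) ^ (n + (i : ℕ))) • E i
              else if t = i then -(((-1 : k) ^ (n + (i : ℕ))) • E (i.succAbove j)) else 0) := by
        intro t
        rw [m.map_update_smul, hval j t]
      rw [Finset.sum_congr rfl fun t _ => hterm t]
      rw [Fin.sum_univ_succAbove (fun t => (f (E (i.succAbove j)) t) •
        (if t = i.succAbove j then ((-1 : k) ^ (n + (i : ℕ))) • E i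
          else if t = i then -(((-1 : k) ^ (n + (i : ℕ))) • E (i.succAbove j)) else 0)) i]
      have hii : ¬(i = i.succAbove j) := Fin.ne_succAbove i j
      rw [if_neg hii, if_pos rfl]
      have hrest : ∑ j' : Fin n, (f (E (i.succAbove j)) (i.succAbove j')) •
          (if i.succAbove j' = i.succAbove j then ((-1 : k) ^ (n + (i : ℕ))) • E i
            else if i.succAbove j' = i then -(((-1 : k) ^ (n + (i : ℕ))) • E (i.succAbove j))
            else 0)
          = (f (E (i.succAbove j)) (i.succAbove j)) • (((-1 : k) ^ (n + (i : ℕ))) • E i) := by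
        rw [Finset.sum_eq_single_of_mem j (Finset.mem_univ j) ?_, if_pos rfl]
        intro j'' _ hj''
        rw [if_neg (fun hcc => hj'' (Fin.succAbove_right_injective hcc)),
          if_neg (Fin.succAbove_ne i j''), smul_zero]
      rw [hrest]
      exact add_comm _ _
    -- now assemble
    have hLX : L (fun b => E (i.succAbove b))
        = ((-1 : k) ^ (n + (i : ℕ))) • f0 (E i) := by
      rw [hL, LinearMap.compAlternatingMap_apply, hGm, hbasis i, map_smul]
    have hRX : R (fun b => E (i.succAbove b))
        = ((-1 : k) ^ (n + (i : ℕ))) • f0 (E i) := by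
      rw [hRmR, hRm]
      have hupd : ∀ j : Fin n, Function.update (fun b => E (i.succAbove b)) j
          (f ((fun b => E (i.succAbove b)) j))
          = Function.update (fun b => E (i.succAbove b)) j (f (E (i.succAbove j))) := fun j => rfl
      rw [Finset.sum_congr rfl fun j _ => (hupd j) ▸ (hexp j)]
      rw [Finset.sum_add_distrib]
      have ha : ∀ j : Fin n, f (E (i.succAbove j)) (i.succAbove j)
          = c - f0 (E (i.succAbove j)) (i.succAbove j) := by
        intro j; rw [hf, if_pos rfl]
      have hb : ∀ j : Fin n, f (E (i.succAbove j)) i = -(f0 (E i) (i.succAbove j)) := by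
        intro j; rw [hf, if_neg (Fin.ne_succAbove i j), zero_sub]
      have hsum1 : (∑ j : Fin n, (f (E (i.succAbove j)) (i.succAbove j)) •
          (((-1 : k) ^ (n + (i : ℕ))) • E i))
          = (f0 (E i) i) • (((-1 : k) ^ (n + (i : ℕ))) • E i) := by
        rw [← Finset.sum_smul]
        congr 1
        rw [Finset.sum_congr rfl fun j _ => ha j, Finset.sum_sub_distrib,
          Finset.sum_const, Finset.card_univ, Fintype.card_fin]
        have hsub : ∑ j : Fin n, f0 (E (i.succAbove j)) (i.succAbove j)
            = S - f0 (E i) i := by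
          rw [hS, Fin.sum_univ_succAbove (fun t => f0 (E t) t) i]
          ring
        have hnc : (n : k) * c = S := by rw [hc]; field_simp
        rw [hsub, nsmul_eq_mul, hnc]
        ring
      have hsum2 : (∑ j : Fin n, (f (E (i.succAbove j)) i) •
          (-(((-1 : k) ^ (n + (i : ℕ))) • E (i.succAbove j))))
          = ((-1 : k) ^ (n + (i : ℕ))) • (f0 (E i) - (f0 (E i) i) • E i) := by
        have hterm2 : ∀ j : Fin n, (f (E (i.succAbove j)) i) •
            (-(((-1 : k) ^ (n + (i : ℕ))) • E (i.succAbove j)))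
            = ((-1 : k) ^ (n + (i : ℕ))) • ((f0 (E i) (i.succAbove j)) • E (i.succAbove j)) := by
          intro j
          rw [hb j, neg_smul_neg, smul_comm]
        rw [Finset.sum_congr rfl fun j _ => hterm2 j, ← Finset.smul_sum]
        congr 1
        have h1 : ∑ t, (f0 (E i) t) • E t = f0 (E i) := by
          funext u
          rw [Finset.sum_apply]
          simp [hE, Pi.single_apply]
        have h2 : (f0 (E i) i) • E i + ∑ j : Fin n, (f0 (E i) (i.succAbove j)) • E (i.succAbove j)
            = f0 (E i) := by
          rw [← Fin.sum_univ_succAbove (fun t => (f0 (E i) t) • E t) i]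
          exact h1
        exact eq_sub_of_add_eq' h2
      rw [hsum1, hsum2, smul_sub, smul_comm]
      abel
    rw [hLX, hRX]
  have hLR : L = R := by
    refine Module.Basis.ext_alternating (Pi.basisFun k (Fin (n + 1))) fun v hv => ?_
    simp only [Pi.basisFun_apply]
    obtain ⟨i, hi⟩ : ∃ i : Fin (n + 1), ∀ b, v b ≠ i := by
      by_contra hcon
      push_neg at hcon
      have hsurj : Function.Surjective v := fun i => hcon i
      have := Fintype.card_le_of_surjective v hsurj
      simp [Fintype.card_fin] at this
    have hw : ∀ b, ∃ z, i.succAbove z = v b := fun b => Fin.exists_succAbove_eq (hi b)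
    choose w hwspec using hw
    have hwinj : Function.Injective w := fun a b hab => hv (by rw [← hwspec a, ← hwspec b, hab])
    set π : Equiv.Perm (Fin n) :=
      Equiv.ofBijective w (Finite.injective_iff_bijective.mp hwinj) with hπ
    have hvπ : (fun b => (Pi.single (v b) 1 : Fin (n + 1) → k))
        = (fun b => E (i.succAbove b)) ∘ π := by
      funext b
      simp only [comp_apply, hπ, Equiv.ofBijective_apply, hwspec b, hE]
    rw [hvπ, L.map_perm, R.map_perm, hcore i]
  intro x
  have := congrArg (fun (T : (Fin (n + 1) → k) [⋀^Fin n]→ₗ[k] (Fin (n + 1) → k)) => T x) hLR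
  rw [hRmR, hRm] at this
  exact this
end

section
/- Let A = ⊕_{i=1}^t I_i be a semisimple finite-dimensional n-ary Filippov algebra over an algebraically closed field of characteristic zero, written as a direct sum of simple ideals, and let (f_0, f_1, ..., f_n) be an (n+1)-ary derivation of A. Then f_j(I_i) ⊆ I_i for every j ∈ {0,1,...,n} and every i ∈ {1,...,t}. -/
/-- Let `A = ⊕ᵢ Iᵢ` be a semisimple finite-dimensional `n`-ary Filippov
algebra over an algebraically closed field of characteristic zero, a direct sum of simple
ideals, and let `(f₀, f₁, …, fₙ)` be an `(n+1)`-ary derivation of `A`. Then every component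
of the derivation preserves each simple ideal: `fⱼ(Iᵢ) ⊆ Iᵢ`. -/
theorem semisimple_filippov_derivation_preserves_ideals
    {k : Type*} [Field k] [IsAlgClosed k] [CharZero k]
    {A : Type*} [AddCommGroup A] [Module k A] [FiniteDimensional k A]
    {n : ℕ} (hn : 2 ≤ n)
    (m : MultilinearMap k (fun _ : Fin n => A) A)
    -- anticommutativity (alternating)
    (hanti : ∀ (x : Fin n → A) (p q : Fin n), p ≠ q → x p = x q → m x = 0)
    -- the Filippov fundamental identity
    (hFil : ∀ x y : Fin n → A,
      m (Function.update y (⟨0, by omega⟩ : Fin n) (m x)) =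
        ∑ i, m (Function.update x i (m (Function.update y (⟨0, by omega⟩ : Fin n) (x i)))))
    {t : ℕ} (I : Fin t → Submodule k A)
    -- A is the (internal) direct sum of the ideals Iᵢ
    (hdsum : DirectSum.IsInternal I)
    -- each Iᵢ is an ideal of A
    (hideal : ∀ (s : Fin t) (j : Fin n) (x : Fin n → A), x j ∈ I s → m x ∈ I s)
    -- each Iᵢ is simple: nonabelian …
    (hnonab : ∀ s : Fin t, ∃ x : Fin n → A, (∀ j, x j ∈ I s) ∧ m x ≠ 0)
    -- … and with no proper nonzero ideals of the algebra Iᵢ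
    (hsimple : ∀ (s : Fin t) (J : Submodule k A), J ≤ I s →
      (∀ (j : Fin n) (x : Fin n → A), (∀ l, x l ∈ I s) → x j ∈ J → m x ∈ J) →
      J = ⊥ ∨ J = I s)
    (f0 : A →ₗ[k] A) (f : Fin n → (A →ₗ[k] A))
    (hder : ∀ x : Fin n → A, f0 (m x) = ∑ i, m (Function.update x i (f i (x i)))) :
    (∀ s : Fin t, (I s).map f0 ≤ I s) ∧
    (∀ (j : Fin n) (s : Fin t), (I s).map (f j) ≤ I s) := by
  classical
  set z0 : Fin n := ⟨0, by omega⟩ with hz0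
  have hNT : Nontrivial (Fin n) := ⟨⟨⟨0, by omega⟩, ⟨1, by omega⟩, by simp [Fin.ext_iff]⟩⟩
  -- swap lemma
  have hswap : ∀ (v : Fin n → A) (p q : Fin n), p ≠ q → m (v ∘ Equiv.swap p q) = - m v := by
    intro v p q h
    let F : A [⋀^Fin n]→ₗ[k] A :=
      { toMultilinearMap := m, map_eq_zero_of_eq' := fun x i j he hij => hanti x i j hij he }
    exact F.map_swap v h
  -- pairwise disjointness
  have hdisj : ∀ (r s : Fin t), r ≠ s → ∀ a, a ∈ I r → a ∈ I s → a = 0 := by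
    intro r s hrs a har has
    have := (hdsum.submodule_iSupIndep.pairwiseDisjoint hrs)
    exact (Submodule.disjoint_def.mp this) a har has
  -- claim A: if brackets with c at position p vanish, they vanish at every position
  have claimA : ∀ (r : Fin t) (c : A) (p : Fin n),
      (∀ y : Fin n → A, (∀ l, y l ∈ I r) → m (Function.update y p c) = 0) →
      ∀ z : Fin n → A, (∀ l, z l ∈ I r) → (∃ q, z q = c) → m z = 0 := by
    intro r c p hc z hz ⟨q, hq⟩
    by_cases hqp : q = p
    · subst hqp
      have := hc z hz
      rwa [← hq, Function.update_eq_self] at this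
    · have h1 : m (z ∘ Equiv.swap p q) = - m z := hswap z p q (Ne.symm hqp)
      have h2 : m (z ∘ Equiv.swap p q) = 0 := by
        have hz' : ∀ l, (z ∘ Equiv.swap p q) l ∈ I r := fun l => hz _
        have he : (z ∘ Equiv.swap p q) p = c := by
          simp [Function.comp, Equiv.swap_apply_left, hq]
        have := hc (z ∘ Equiv.swap p q) hz'
        rwa [← he, Function.update_eq_self] at this
      rw [h2] at h1
      exact neg_eq_zero.mp h1.symm
  -- for each r: the only central element of I r is 0
  have hzero : ∀ (r : Fin t) (c : A), c ∈ I r →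
      (∀ y : Fin n → A, (∀ l, y l ∈ I r) → m (Function.update y z0 c) = 0) → c = 0 := by
    intro r
    -- the submodule of such central elements
    let Z : Submodule k A :=
      (I r) ⊓ (⨅ y : {y : Fin n → A // ∀ l, y l ∈ I r},
        LinearMap.ker (m.toLinearMap y.1 z0))
    have hZmem : ∀ c, c ∈ Z ↔ c ∈ I r ∧
        ∀ y : Fin n → A, (∀ l, y l ∈ I r) → m (Function.update y z0 c) = 0 := by
      intro c
      constructor
      · rintro ⟨h1, h2⟩
        refine ⟨h1, fun y hy => ?_⟩
        have := Submodule.mem_iInf _ |>.mp h2 ⟨y, hy⟩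
        simpa [MultilinearMap.toLinearMap] using this
      · rintro ⟨h1, h2⟩
        refine ⟨h1, Submodule.mem_iInf _ |>.mpr fun y => ?_⟩
        simpa [MultilinearMap.toLinearMap] using h2 y.1 y.2
    have hZideal : ∀ (j : Fin n) (x : Fin n → A), (∀ l, x l ∈ I r) → x j ∈ Z → m x ∈ Z := by
      intro j x hx hxj
      obtain ⟨hxj1, hxj2⟩ := (hZmem _).mp hxj
      refine (hZmem _).mpr ⟨hideal r j x hxj1, fun y hy => ?_⟩
      rw [hFil x y]
      refine Finset.sum_eq_zero fun i _ => ?_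
      by_cases hij : i = j
      · subst hij
        rw [hxj2 y hy]
        exact m.map_coord_zero _ (Function.update_self _ 0 x)
      · refine claimA r (x j) z0 hxj2 _ (fun l => ?_)
          ⟨j, Function.update_of_ne (Ne.symm hij) _ _⟩
        by_cases hl : l = i
        · subst hl
          rw [Function.update_self]
          exact hideal r z0 _ (by rw [Function.update_self]; exact hx l)
        · rw [Function.update_of_ne hl]; exact hx l
    rcases hsimple r Z inf_le_left hZideal with hbot | htop
    · intro c hc1 hc2
      have : c ∈ Z := (hZmem c).mpr ⟨hc1, hc2⟩
      rw [hbot] at this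
      simpa using this
    · exfalso
      obtain ⟨x, hx, hmx⟩ := hnonab r
      have hx0 : x z0 ∈ Z := htop ▸ hx z0
      obtain ⟨-, h2⟩ := (hZmem _).mp hx0
      exact hmx (by simpa [Function.update_eq_self] using h2 x hx)
  constructor
  · -- f0 preserves each ideal
    intro s
    set J : Submodule k A :=
      Submodule.span k {a | ∃ x : Fin n → A, (∀ l, x l ∈ I s) ∧ m x = a} with hJ
    have hJle : J ≤ I s := by
      rw [hJ, Submodule.span_le]
      rintro _ ⟨x, hx, rfl⟩
      exact hideal s z0 x (hx z0)
    have hJideal : ∀ (j : Fin n) (x : Fin n → A), (∀ l, x l ∈ I s) → x j ∈ J → m x ∈ J :=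
      fun j x hx _ => Submodule.subset_span ⟨x, hx, rfl⟩
    have hJeq : J = I s := by
      rcases hsimple s J hJle hJideal with hbot | htop
      · exfalso
        obtain ⟨x, hx, hmx⟩ := hnonab s
        have hmem : m x ∈ J := Submodule.subset_span ⟨x, hx, rfl⟩
        rw [hbot] at hmem
        exact hmx (by simpa using hmem)
      · exact htop
    have key : J ≤ Submodule.comap f0 (I s) := by
      rw [hJ, Submodule.span_le]
      rintro _ ⟨x, hx, rfl⟩
      simp only [Set.mem_setOf_eq, SetLike.mem_coe, Submodule.mem_comap]
      rw [hder x]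
      refine Submodule.sum_mem _ fun i _ => ?_
      obtain ⟨l, hl⟩ := exists_ne i
      exact hideal s l _ (by rw [Function.update_of_ne hl]; exact hx l)
    rintro _ ⟨a, ha, rfl⟩
    exact key (hJeq ▸ ha)
  · -- each f j preserves each ideal
    intro j s
    rintro _ ⟨a, ha, rfl⟩
    -- decompose f j a over the ideals
    have hmem : f j a ∈ ⨆ q, I q := hdsum.submodule_iSup_eq_top ▸ Submodule.mem_top
    rw [Submodule.mem_iSup_iff_exists_finsupp] at hmem
    obtain ⟨g, hg, hgsum⟩ := hmem
    have hsum : ∑ q, g q = f j a := by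
      rw [← hgsum, Finsupp.sum_fintype]
      intro; rfl
    have hcr : ∀ r : Fin t, r ≠ s → g r = 0 := by
      intro r hrs
      refine hzero r (g r) (hg r) ?_
      -- brackets vanish at position j
      have hposj : ∀ y : Fin n → A, (∀ l, y l ∈ I r) → m (Function.update y j (g r)) = 0 := by
        intro y hy
        set w : Fin n → A := Function.update y j a with hw
        have hw_j : w j = a := Function.update_self j a y
        have hwl : ∀ l, l ≠ j → w l ∈ I r := fun l hl => by
          rw [hw, Function.update_of_ne hl]; exact hy l
        have hmw : m w = 0 := by
          obtain ⟨l, hl⟩ := exists_ne j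
          exact hdisj s r (Ne.symm hrs) _ (hideal s j w (hw_j ▸ ha))
            (hideal r l w (hwl l hl))
        have hid := hder w
        rw [hmw, map_zero] at hid
        have hsplit : (0:A) = (∑ i ∈ Finset.univ.erase j, m (Function.update w i (f i (w i))))
            + m (Function.update w j (f j (w j))) := by
          rw [hid, ← Finset.sum_erase_add _ _ (Finset.mem_univ j)]
        have hu : (∑ i ∈ Finset.univ.erase j, m (Function.update w i (f i (w i)))) ∈ I s := by
          refine Submodule.sum_mem _ fun i hi => ?_
          have hij : i ≠ j := Finset.ne_of_mem_erase hi
          refine hideal s j _ ?_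
          rw [Function.update_of_ne (Ne.symm hij), hw_j]; exact ha
        have hjterm : m (Function.update w j (f j (w j))) = m (Function.update y j (g r)) := by
          have e1 : Function.update w j (f j (w j)) = Function.update y j (f j a) := by
            rw [hw_j, hw, Function.update_idem]
          rw [e1, ← hsum]
          have e2 := map_sum (m.toLinearMap y j) (fun q => g q) Finset.univ
          simp only [MultilinearMap.toLinearMap_apply] at e2
          rw [e2]
          refine Finset.sum_eq_single r (fun q _ hqr => ?_)
            (fun h => absurd (Finset.mem_univ r) h)
          obtain ⟨l, hl⟩ := exists_ne j
          exact hdisj q r hqr _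
            (hideal q j _ (by rw [Function.update_self]; exact hg q))
            (hideal r l _ (by rw [Function.update_of_ne hl]; exact hy l))
        have hvs : m (Function.update y j (g r)) ∈ I s := by
          rw [← hjterm]
          have : m (Function.update w j (f j (w j)))
              = -(∑ i ∈ Finset.univ.erase j, m (Function.update w i (f i (w i)))) :=
            eq_neg_of_add_eq_zero_right hsplit.symm
          rw [this]
          exact Submodule.neg_mem _ hu
        have hvr : m (Function.update y j (g r)) ∈ I r :=
          hideal r j _ (by rw [Function.update_self]; exact hg r)
        exact hdisj s r (Ne.symm hrs) _ hvs hvr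
      -- transport to position 0 via claim A
      intro y hy
      refine claimA r (g r) j hposj _ (fun l => ?_) ⟨z0, Function.update_self _ _ _⟩
      by_cases hl : l = z0
      · subst hl; rw [Function.update_self]; exact hg r
      · rw [Function.update_of_ne hl]; exact hy l
    have : f j a = ∑ q, g q := hsum.symm
    rw [this]
    refine Submodule.sum_mem _ fun q _ => ?_
    by_cases hq : q = s
    · subst hq; exact hg q
    · rw [hcr q hq]; exact Submodule.zero_mem _
end
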